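/- arXiv:2402.15904 — 6 statements merged into one kernel-verified Lean document; each statement's English description precedes it below -/
import Mathlib

section
/- Let (u_p)_{p ∈ [0,1]} be any family of utility functions where each u_p : [0,1] → ℝ is single-peaked with peak p. A mechanism f : [0,1] → [0,1] for a single agent is continuous and strategyproof on this domain if and only if there exist constants α_0 ≤ α_1 in [0,1] such that f(p) = med(p, α_0, α_1) for all p ∈ [0,1]. -/
/-!
Single-peakedness makes `u_p` strictly increase towards `p` along `[0,1]`, so on an interval
`[a₀, a₁]` it has the unique maximiser `med(p, a₀, a₁)`, the point of `[a₀, a₁]` closest to `p`.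
A continuous mechanism on `[0,1]` has range exactly `[a₀, a₁]`, its minimum and maximum, and
strategyproofness says `f p` maximises `u_p` over that range.
-/

def SinglePeaked (p : ℝ) (u : ℝ → ℝ) : Prop :=
  ∀ q ∈ Set.Icc (0:ℝ) 1, q ≠ p → ∀ l ∈ Set.Ioo (0:ℝ) 1,
    u q < u (l * p + (1 - l) * q) ∧ u (l * p + (1 - l) * q) < u p

noncomputable def med (l : List ℝ) : ℝ :=
  (l.insertionSort (· ≤ ·)).getD (l.length / 2) 0

open Set
open scoped Interval

theorem Set.projIcc_mem_uIcc {α : Type*} [LinearOrder α] {a b x : α} (h : a ≤ b) (p : α)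
    (hx : x ∈ Icc a b) : (projIcc a b h p : α) ∈ [[x, p]] := by
  rw [coe_projIcc, mem_uIcc]
  rcases le_total p a with hp | hp
  · right; constructor <;> simp [hp, hx.1]
  · rcases le_total p b with hp' | hp'
    · simp [hp, hp', le_total]
    · left; constructor <;> simp [hp', hx.2, hx.1.trans hx.2]

theorem med_eq_projIcc {p a₀ a₁ : ℝ} (h : a₀ ≤ a₁) : med [p, a₀, a₁] = projIcc a₀ a₁ h p := by
  simp only [med, coe_projIcc, List.insertionSort, List.foldr, List.orderedInsert, if_pos h,
    List.length]
  split_ifs with h₀ h₁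
  · simp [max_eq_left ((min_le_right _ _).trans h₀)]
  · simp [min_eq_right h₁, max_eq_right (le_of_not_ge h₀)]
  · simp [min_eq_left (le_of_not_ge h₁), max_eq_right h]

namespace SinglePeaked

variable {p : ℝ} {u : ℝ → ℝ}

theorem lt_peak (h : SinglePeaked p u) {x : ℝ} (hx : x ∈ Icc (0:ℝ) 1) (hne : x ≠ p) :
    u x < u p := by
  obtain ⟨h₁, h₂⟩ := h x hx hne (1 / 2) (by norm_num)
  exact h₁.trans h₂

theorem lt_of_mem_uIcc (h : SinglePeaked p u) {x y : ℝ} (hx : x ∈ Icc (0:ℝ) 1)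
    (hy : y ∈ [[x, p]]) (hne : x ≠ y) : u x < u y := by
  rcases eq_or_ne y p with rfl | hyp
  · exact h.lt_peak hx hne
  have hxp : x ≠ p := by rintro rfl; exact hyp (by simpa using hy)
  -- `y` is the convex combination `l p + (1 - l) x` with `l = (y - x) / (p - x) ∈ (0, 1)`.
  have hl : (y - x) / (p - x) ∈ Ioo (0:ℝ) 1 := by
    rw [mem_uIcc] at hy
    rcases hy with ⟨h₁, h₂⟩ | ⟨h₁, h₂⟩
    · have hy₁ : x < y := lt_of_le_of_ne h₁ hne
      have hy₂ : y < p := lt_of_le_of_ne h₂ hyp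
      exact ⟨div_pos (by linarith) (by linarith), (div_lt_one (by linarith)).2 (by linarith)⟩
    · have hy₁ : y < x := lt_of_le_of_ne h₂ hne.symm
      have hy₂ : p < y := lt_of_le_of_ne h₁ hyp.symm
      exact ⟨div_pos_of_neg_of_neg (by linarith) (by linarith),
        (div_lt_one_of_neg (by linarith)).2 (by linarith)⟩
  have hcomb : (y - x) / (p - x) * p + (1 - (y - x) / (p - x)) * x = y := by
    field_simp [sub_ne_zero.2 hxp.symm]
    ring
  simpa [hcomb] using (h x hx hxp _ hl).1

theorem lt_projIcc (h : SinglePeaked p u) {a₀ a₁ x : ℝ} (ha₀ : 0 ≤ a₀) (ha₁ : a₁ ≤ 1)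
    (ha : a₀ ≤ a₁) (hx : x ∈ Icc a₀ a₁) (hne : x ≠ projIcc a₀ a₁ ha p) :
    u x < u (projIcc a₀ a₁ ha p) :=
  h.lt_of_mem_uIcc ⟨ha₀.trans hx.1, hx.2.trans ha₁⟩ (projIcc_mem_uIcc ha p hx) hne

end SinglePeaked

/-- for a single agent over two alternatives, with an arbitrary family of
single-peaked utilities (one per peak), a mechanism is continuous and strategyproof
iff it is `p ↦ med(p, α₀, α₁)` for some `α₀ ≤ α₁` in `[0,1]`. -/
theorem single_agent_characterization
    (u : ℝ → ℝ → ℝ) (hu : ∀ p ∈ Set.Icc (0:ℝ) 1, SinglePeaked p (u p))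
    (f : ℝ → ℝ) (hf : ∀ p ∈ Set.Icc (0:ℝ) 1, f p ∈ Set.Icc (0:ℝ) 1) :
    (ContinuousOn f (Set.Icc 0 1) ∧
        ∀ p ∈ Set.Icc (0:ℝ) 1, ∀ p' ∈ Set.Icc (0:ℝ) 1, u p (f p') ≤ u p (f p)) ↔
      ∃ a0 a1 : ℝ, a0 ∈ Set.Icc (0:ℝ) 1 ∧ a1 ∈ Set.Icc (0:ℝ) 1 ∧ a0 ≤ a1 ∧
        ∀ p ∈ Set.Icc (0:ℝ) 1, f p = med [p, a0, a1] := by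
  constructor
  · rintro ⟨hcont, hsp⟩
    set a₀ := sInf (f '' Icc 0 1)
    set a₁ := sSup (f '' Icc 0 1)
    have hrange : f '' Icc 0 1 = Icc a₀ a₁ := hcont.image_Icc zero_le_one
    have ha : a₀ ≤ a₁ := nonempty_Icc.1 (hrange ▸ (nonempty_Icc.2 zero_le_one).image f)
    have hsub : Icc a₀ a₁ ⊆ Icc 0 1 := hrange ▸ image_subset_iff.2 fun p hp => hf p hp
    have ha₀ := hsub (left_mem_Icc.2 ha)
    have ha₁ := hsub (right_mem_Icc.2 ha)
    refine ⟨a₀, a₁, ha₀, ha₁, ha, fun p hp => ?_⟩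
    rw [med_eq_projIcc ha]
    by_contra hne
    obtain ⟨q, hq, hfq⟩ : (projIcc a₀ a₁ ha p : ℝ) ∈ f '' Icc 0 1 := by
      rw [hrange]; exact (projIcc a₀ a₁ ha p).2
    have hlt := (hu p hp).lt_projIcc ha₀.1 ha₁.2 ha (hrange ▸ mem_image_of_mem f hp) hne
    exact (hfq ▸ hsp p hp q hq).not_gt hlt
  · rintro ⟨a₀, a₁, ha₀, ha₁, ha, hmed⟩
    have hclamp : EqOn f (fun p => (projIcc a₀ a₁ ha p : ℝ)) (Icc 0 1) := fun p hp => by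
      rw [hmed p hp, med_eq_projIcc ha]
    refine ⟨(continuous_subtype_val.comp continuous_projIcc).continuousOn.congr hclamp,
      fun p hp p' hp' => ?_⟩
    rw [hmed p hp, hmed p' hp', med_eq_projIcc ha, med_eq_projIcc ha]
    rcases eq_or_ne (projIcc a₀ a₁ ha p' : ℝ) (projIcc a₀ a₁ ha p) with heq | hne
    · rw [heq]
    · exact ((hu p hp).lt_projIcc ha₀.1 ha₁.2 ha (projIcc a₀ a₁ ha p').2 hne).le
end

section
/- Fix two alternatives, n agents, and any family (u_p)_{p ∈ [0,1]} of single-peaked utility functions, one per peak. A continuous mechanism f : [0,1]^n → [0,1] satisfies anonymity and strategyproofness on this domain if and only if there exist constants α_0 ≤ α_1 ≤ … ≤ α_n in [0,1] such that f(p_1, …, p_n) = med(p_1, …, p_n, α_0, α_1, …, α_n) for every profile. -/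
/-!
For fixed reports of the others, a continuous mechanism maps agent `i`'s report `t ∈ [0,1]` onto an
interval `[m, M]`; strategyproofness for a single-peaked utility with peak `t` forces the value at
`t` to be the point of `[m, M]` closest to `t`, i.e. `max m (min t M)`, where `m` and `M` are the
values at `t = 0` and `t = 1`. Conversely, this coordinatewise clamp form is strategyproof. A
generalized median has the clamp form too: adding a voter `t` to an even list moves its median to
`t` clamped between the medians obtained for `t = 0` and `t = 1`. Two mechanisms in clamp form agree
once they agree on `{0,1}ⁿ`, by pushing the coordinates to `0` or `1` one at a time; there an
anonymous mechanism only sees the number `k` of ones, and its value is the phantom `αₖ`.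
-/

open Set Function
open scoped Finset

theorem List.countP_ofFn {α : Type*} {m : ℕ} (g : Fin m → α) (q : α → Prop) [DecidablePred q] :
    (List.ofFn g).countP (fun x => decide (q x)) = #{i | q (g i)} := by
  rw [← Multiset.coe_countP, ← Fin.univ_val_map, Multiset.countP_map, Finset.card,
    Finset.filter_val]

theorem List.exists_mem_and_of_length_lt_countP_add {α : Type*} {l : List α} {p q : α → Bool}
    (h : l.length < l.countP p + l.countP q) : ∃ x ∈ l, p x ∧ q x := by
  by_contra! hpq
  have : l.countP q ≤ l.countP (fun x => decide ¬p x = true) :=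
    List.countP_mono_left fun x hx hqx => by simpa using fun hpx => hpq x hx hpx hqx
  have := List.length_eq_countP_add_countP p (l := l)
  omega

theorem List.countP_cons_le_countP_cons {α : Type*} {p : α → Bool} {x y : α} (l : List α)
    (h : p x → p y) : (x :: l).countP p ≤ (y :: l).countP p := by
  simp only [List.countP_cons]
  split_ifs <;> simp_all

theorem List.ofFn_update {α : Type*} {n : ℕ} (P : Fin n → α) (i : Fin n) (x : α) :
    List.ofFn (update P i x) = (List.ofFn P).set i x := by
  refine List.ext_getElem (by simp) fun j hj _ => ?_
  simp [List.getElem_set, update_apply, Fin.ext_iff, eq_comm]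

theorem Monotone.succ_le_countP_le {α : Type*} [LinearOrder α] {m : ℕ} {a : Fin m → α}
    (ha : Monotone a) (k : Fin m) : (k : ℕ) + 1 ≤ (List.ofFn a).countP (· ≤ a k) := by
  rw [List.countP_ofFn, ← Fin.card_Iic]
  exact Finset.card_le_card fun j hj => by simpa using ha (Finset.mem_Iic.1 hj)

theorem Monotone.sub_le_countP_ge {α : Type*} [LinearOrder α] {m : ℕ} {a : Fin m → α}
    (ha : Monotone a) (k : Fin m) : m - k ≤ (List.ofFn a).countP (a k ≤ ·) := by
  rw [List.countP_ofFn, ← Fin.card_Ici]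
  exact Finset.card_le_card fun j hj => by simpa using ha (Finset.mem_Ici.1 hj)

theorem apply_eq_apply_of_perm_ofFn {α β : Type*} [LinearOrder α] {n : ℕ} {s : Set α}
    {f : (Fin n → α) → β}
    (hf : ∀ P : Fin n → α, (∀ i, P i ∈ s) → ∀ τ : Equiv.Perm (Fin n), f (P ∘ τ) = f P)
    {P Q : Fin n → α} (hP : ∀ i, P i ∈ s) (hQ : ∀ i, Q i ∈ s)
    (h : (List.ofFn P).Perm (List.ofFn Q)) : f P = f Q := by
  have hsort : P ∘ Tuple.sort P = Q ∘ Tuple.sort Q :=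
    List.ofFn_injective <| ((Tuple.sort P).ofFn_comp_perm P |>.trans h |>.trans
      ((Tuple.sort Q).ofFn_comp_perm Q).symm).eq_of_sortedLE
      (List.sortedLE_ofFn_iff.2 (Tuple.monotone_sort P))
      (List.sortedLE_ofFn_iff.2 (Tuple.monotone_sort Q))
  rw [← hf P hP, hsort, hf Q hQ]

section Median

variable {l L : List ℝ} {k : ℕ}

theorem med_perm {l' : List ℝ} (h : l.Perm l') : med l = med l' := by
  rw [med, med, h.length_eq, ((List.perm_insertionSort _ l).trans h |>.trans
    (List.perm_insertionSort _ l').symm).eq_of_sortedLE List.sortedLE_insertionSort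
    List.sortedLE_insertionSort]

theorem succ_le_countP_le_med_and_med_le (h : l.length = 2 * k + 1) :
    k + 1 ≤ l.countP (· ≤ med l) ∧ k + 1 ≤ l.countP (med l ≤ ·) := by
  set s := l.insertionSort (· ≤ ·)
  have hperm : s.Perm l := List.perm_insertionSort _ l
  have hs : s.length = 2 * k + 1 := hperm.length_eq.trans h
  have hk : k < s.length := by omega
  have hmed : med l = s.get ⟨k, hk⟩ := by
    rw [med, List.getD_eq_getElem _ _ (by omega : l.length / 2 < s.length)]
    simp [h, show (2 * k + 1) / 2 = k by omega]
  have hmono : Monotone s.get := List.sortedLE_insertionSort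
  have hle := hmono.succ_le_countP_le ⟨k, hk⟩
  have hge := hmono.sub_le_countP_ge ⟨k, hk⟩
  rw [List.ofFn_get] at hle hge
  rw [← hperm.countP_eq, ← hperm.countP_eq, hmed]
  exact ⟨hle, by simp only [hs] at hge; omega⟩

theorem med_le_of_succ_le_countP {y : ℝ} (h : l.length = 2 * k + 1)
    (hy : k + 1 ≤ l.countP (· ≤ y)) : med l ≤ y := by
  obtain ⟨x, -, hxy, hmx⟩ := List.exists_mem_and_of_length_lt_countP_add (l := l)
    (p := (· ≤ y)) (q := (med l ≤ ·))
    (by have := (succ_le_countP_le_med_and_med_le h).2; omega)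
  simp only [decide_eq_true_eq] at hxy hmx
  exact hmx.trans hxy

theorem le_med_of_succ_le_countP {y : ℝ} (h : l.length = 2 * k + 1)
    (hy : k + 1 ≤ l.countP (y ≤ ·)) : y ≤ med l := by
  obtain ⟨x, -, hyx, hxm⟩ := List.exists_mem_and_of_length_lt_countP_add (l := l)
    (p := (y ≤ ·)) (q := (· ≤ med l))
    (by have := (succ_le_countP_le_med_and_med_le h).1; omega)
  simp only [decide_eq_true_eq] at hyx hxm
  exact hyx.trans hxm

theorem med_eq_of_succ_le_countP {x : ℝ} (h : l.length = 2 * k + 1)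
    (hle : k + 1 ≤ l.countP (· ≤ x)) (hge : k + 1 ≤ l.countP (x ≤ ·)) : med l = x :=
  (med_le_of_succ_le_countP h hle).antisymm (le_med_of_succ_le_countP h hge)

variable (hL : L.length = 2 * k)
include hL

theorem med_cons_le_med_cons {x y : ℝ} (hxy : x ≤ y) : med (x :: L) ≤ med (y :: L) := by
  refine le_med_of_succ_le_countP (k := k) (by simp [hL]) ((succ_le_countP_le_med_and_med_le
    (k := k) (l := x :: L) (by simp [hL])).2.trans (L.countP_cons_le_countP_cons ?_))
  simpa using fun h => h.trans hxy

theorem med_cons_eq_of_sameSide {x y : ℝ} (hle : y ≤ med (y :: L) → x ≤ med (y :: L))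
    (hge : med (y :: L) ≤ y → med (y :: L) ≤ x) : med (x :: L) = med (y :: L) := by
  have hy := succ_le_countP_le_med_and_med_le (k := k) (l := y :: L) (by simp [hL])
  exact med_eq_of_succ_le_countP (by simp [hL])
    (hy.1.trans (L.countP_cons_le_countP_cons (by simpa using hle)))
    (hy.2.trans (L.countP_cons_le_countP_cons (by simpa using hge)))

theorem med_cons_eq_self {x y p : ℝ} (hx : med (x :: L) ≤ p) (hy : p ≤ med (y :: L)) :
    med (p :: L) = p := by
  have hxc := (succ_le_countP_le_med_and_med_le (k := k) (l := x :: L) (by simp [hL])).1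
  have hyc := (succ_le_countP_le_med_and_med_le (k := k) (l := y :: L) (by simp [hL])).2
  refine med_eq_of_succ_le_countP (by simp [hL]) (hxc.trans ?_) (hyc.trans ?_)
  · exact (List.countP_mono_left fun z _ hz => by simpa using (of_decide_eq_true hz).trans hx).trans
      (L.countP_cons_le_countP_cons (by simp))
  · exact (List.countP_mono_left fun z _ hz => by simpa using hy.trans (of_decide_eq_true hz)).trans
      (L.countP_cons_le_countP_cons (by simp))

theorem med_cons_eq_max_min {x y p : ℝ} (hxp : x ≤ p) (hpy : p ≤ y) :
    med (p :: L) = max (med (x :: L)) (min p (med (y :: L))) := by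
  have hmono := med_cons_le_med_cons hL (hxp.trans hpy)
  rcases le_total p (med (x :: L)) with hp₀ | hp₀
  · rw [med_cons_eq_of_sameSide hL (fun _ => hp₀) fun h => h.trans hxp,
      max_eq_left ((min_le_left _ _).trans hp₀)]
  rcases le_total p (med (y :: L)) with hp₁ | hp₁
  · rw [med_cons_eq_self hL hp₀ hp₁, min_eq_left hp₁, max_eq_right hp₀]
  · rw [med_cons_eq_of_sameSide hL (fun h => hpy.trans h) fun _ => hp₁, min_eq_right hp₁,
      max_eq_right hmono]

end Median

section

open unitInterval

def IsClamp (h : ℝ → ℝ) : Prop :=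
  h 0 ≤ h 1 ∧ ∀ t ∈ I, h t = max (h 0) (min t (h 1))

theorem IsClamp.congr {h h' : ℝ → ℝ} (hh : IsClamp h) (heq : EqOn h h' I) : IsClamp h' := by
  have h₀ := heq zero_mem
  have h₁ := heq one_mem
  exact ⟨h₀ ▸ h₁ ▸ hh.1, fun t ht => h₀ ▸ h₁ ▸ heq ht ▸ hh.2 t ht⟩

theorem isClamp_med_cons {L : List ℝ} {k : ℕ} (hL : L.length = 2 * k) :
    IsClamp (fun t => med (t :: L)) :=
  ⟨med_cons_le_med_cons hL zero_le_one, fun _ ht => med_cons_eq_max_min hL ht.1 ht.2⟩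

theorem isClamp_med_update {n : ℕ} (a : Fin (n + 1) → ℝ) (P : Fin n → ℝ) (i : Fin n) :
    IsClamp (fun t => med (List.ofFn (update P i t) ++ List.ofFn a)) := by
  have hperm (t : ℝ) : (List.ofFn (update P i t) ++ List.ofFn a).Perm
      (t :: ((List.ofFn P).eraseIdx i ++ List.ofFn a)) := by
    rw [List.ofFn_update]
    exact (List.set_perm_cons_eraseIdx (by simp) t).append_right _
  simp only [med_perm (hperm _)]
  exact isClamp_med_cons (k := n)
    (by simp only [List.length_append, List.length_eraseIdx, List.length_ofFn]; grind)

namespace SinglePeaked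

variable {p : ℝ} {u : ℝ → ℝ}

theorem apply_lt_of_mem_openSegment (hu : SinglePeaked p u) {q x : ℝ} (hq : q ∈ I)
    (hqp : q ≠ p) (hx : x ∈ openSegment ℝ p q) : u q < u x := by
  obtain ⟨l, l', hl, hl', hll', rfl⟩ := hx
  obtain rfl : l' = 1 - l := by linarith
  simpa using (hu q hq hqp l ⟨hl, by linarith⟩).1

theorem apply_lt_apply_peak (hu : SinglePeaked p u) {q : ℝ} (hq : q ∈ I) (hqp : q ≠ p) :
    u q < u p :=
  (hu q hq hqp (1 / 2) ⟨by norm_num, by norm_num⟩).elim lt_trans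

theorem strictMonoOn (hu : SinglePeaked p u) (hp : p ≤ 1) : StrictMonoOn u (Icc 0 p) := by
  intro x hx y hy hxy
  have hxI : x ∈ I := ⟨hx.1, hx.2.trans hp⟩
  rcases hy.2.eq_or_lt with rfl | hyp
  · exact hu.apply_lt_apply_peak hxI hxy.ne
  · refine hu.apply_lt_of_mem_openSegment hxI (hxy.trans hyp).ne ?_
    rw [openSegment_symm, openSegment_eq_Ioo (hxy.trans hyp)]
    exact ⟨hxy, hyp⟩

theorem strictAntiOn (hu : SinglePeaked p u) (hp : 0 ≤ p) : StrictAntiOn u (Icc p 1) := by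
  intro x hx y hy hxy
  have hyI : y ∈ I := ⟨hp.trans hy.1, hy.2⟩
  rcases hx.1.eq_or_lt with rfl | hpx
  · exact hu.apply_lt_apply_peak hyI hxy.ne'
  · refine hu.apply_lt_of_mem_openSegment hyI (hpx.trans hxy).ne' ?_
    rw [openSegment_eq_Ioo (hpx.trans hxy)]
    exact ⟨hpx, hxy⟩

theorem apply_lt_apply_max_min (hu : SinglePeaked p u) (hp : p ∈ I) {m M y : ℝ}
    (hm : 0 ≤ m) (hM : M ≤ 1) (hy : y ∈ Icc m M) (hne : y ≠ max m (min p M)) :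
    u y < u (max m (min p M)) := by
  rcases hne.lt_or_gt with hlt | hgt
  · have hcp : max m (min p M) ≤ p := by
      rcases max_cases m (min p M) with ⟨h, -⟩ | ⟨h, -⟩ <;> rw [h] at hlt ⊢
      · linarith [hy.1]
      · exact min_le_left _ _
    refine hu.strictMonoOn hp.2 ⟨hm.trans hy.1, hlt.le.trans hcp⟩ ⟨?_, hcp⟩ hlt
    exact hm.trans (le_max_left _ _)
  · have hpc : p ≤ max m (min p M) := by
      rcases min_cases p M with ⟨h, -⟩ | ⟨h, -⟩
      · rw [h]; exact le_max_right _ _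
      · rw [h] at hgt; linarith [hy.2, le_max_right m M]
    exact hu.strictAntiOn hp.1 ⟨hpc, (max_le (hy.1.trans hy.2) (min_le_right _ _)).trans hM⟩
      ⟨hpc.trans hgt.le, hy.2.trans hM⟩ hgt

theorem apply_le_apply_max_min (hu : SinglePeaked p u) (hp : p ∈ I) {m M y : ℝ}
    (hm : 0 ≤ m) (hM : M ≤ 1) (hy : y ∈ Icc m M) : u y ≤ u (max m (min p M)) := by
  rcases eq_or_ne y (max m (min p M)) with h | h
  · rw [h]
  · exact (hu.apply_lt_apply_max_min hp hm hM hy h).le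

end SinglePeaked

section OneAgent

variable {u : ℝ → ℝ → ℝ} {h : ℝ → ℝ}

theorem IsClamp.strategyproof (hu : ∀ p ∈ I, SinglePeaked p (u p)) (hh : IsClamp h)
    (h₀ : 0 ≤ h 0) (h₁ : h 1 ≤ 1) : ∀ t ∈ I, ∀ t' ∈ I, u t (h t') ≤ u t (h t) := by
  intro t ht t' ht'
  rw [hh.2 t ht, hh.2 t' ht']
  exact (hu t ht).apply_le_apply_max_min ht h₀ h₁
    ⟨le_max_left _ _, max_le hh.1 (min_le_right _ _)⟩

theorem isClamp_of_strategyproof (hu : ∀ p ∈ I, SinglePeaked p (u p)) (hr : MapsTo h I I)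
    (hc : ContinuousOn h I) (hsp : ∀ t ∈ I, ∀ t' ∈ I, u t (h t') ≤ u t (h t)) : IsClamp h := by
  obtain ⟨m, M, himage⟩ : ∃ m M, h '' I = Icc m M := ⟨_, _, hc.image_Icc zero_le_one⟩
  have hmem : ∀ t ∈ I, h t ∈ Icc m M := fun t ht => himage ▸ mem_image_of_mem h ht
  have hmM : m ≤ M := (hmem 0 zero_mem).elim le_trans
  obtain ⟨s, hs, rfl⟩ : m ∈ h '' I := himage ▸ left_mem_Icc.2 hmM
  obtain ⟨S, hS, rfl⟩ : M ∈ h '' I := himage ▸ right_mem_Icc.2 hmM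
  have hclamp : ∀ t ∈ I, h t = max (h s) (min t (h S)) := by
    intro t ht
    by_contra hne
    obtain ⟨t', ht', hbest⟩ : max (h s) (min t (h S)) ∈ h '' I :=
      himage ▸ ⟨le_max_left _ _, max_le hmM (min_le_right _ _)⟩
    exact (hsp t ht t' ht').not_gt
      (hbest ▸ (hu t ht).apply_lt_apply_max_min ht (hr hs).1 (hr hS).2 (hmem t ht) hne)
  have h₀ : h 0 = h s := by
    rw [hclamp 0 zero_mem, min_eq_left ((hr hs).1.trans hmM), max_eq_left (hr hs).1]
  have h₁ : h 1 = h S := by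
    rw [hclamp 1 one_mem, min_eq_right (hr hS).2, max_eq_right hmM]
  exact ⟨h₀ ▸ h₁ ▸ hmM, fun t ht => h₀ ▸ h₁ ▸ hclamp t ht⟩

end OneAgent

section Mechanism

variable {n : ℕ} {u : ℝ → ℝ → ℝ} {f g : (Fin n → ℝ) → ℝ}

theorem update_mem_unitInterval {P : Fin n → ℝ} (hP : ∀ j, P j ∈ I) (i : Fin n) {t : ℝ}
    (ht : t ∈ I) : ∀ j, update P i t j ∈ I :=
  (forall_update_iff P fun _ x => x ∈ I).2 ⟨ht, fun j _ => hP j⟩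

theorem isClamp_update_of_strategyproof (hu : ∀ p ∈ I, SinglePeaked p (u p))
    (hfr : ∀ P : Fin n → ℝ, (∀ i, P i ∈ I) → f P ∈ I)
    (hfc : ContinuousOn f {P : Fin n → ℝ | ∀ i, P i ∈ I})
    (hsp : ∀ P : Fin n → ℝ, (∀ i, P i ∈ I) → ∀ i, ∀ p' ∈ I,
      u (P i) (f (update P i p')) ≤ u (P i) (f P))
    {P : Fin n → ℝ} (hP : ∀ i, P i ∈ I) (i : Fin n) : IsClamp (fun t => f (update P i t)) := by
  refine isClamp_of_strategyproof hu (fun t ht => hfr _ (update_mem_unitInterval hP i ht)) ?_ ?_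
  · exact hfc.comp (continuous_const.update i continuous_id : Continuous (update P i)).continuousOn
      fun t ht => update_mem_unitInterval hP i ht
  · intro t ht t' ht'
    simpa using hsp _ (update_mem_unitInterval hP i ht) i t' ht'

theorem strategyproof_of_isClamp_update (hu : ∀ p ∈ I, SinglePeaked p (u p))
    (hfr : ∀ P : Fin n → ℝ, (∀ i, P i ∈ I) → f P ∈ I)
    (hf : ∀ P : Fin n → ℝ, (∀ i, P i ∈ I) → ∀ i, IsClamp (fun t => f (update P i t)))
    (P : Fin n → ℝ) (hP : ∀ i, P i ∈ I) (i : Fin n) (p' : ℝ) (hp' : p' ∈ I) :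
    u (P i) (f (update P i p')) ≤ u (P i) (f P) := by
  have h₀ := hfr _ (update_mem_unitInterval hP i zero_mem)
  have h₁ := hfr _ (update_mem_unitInterval hP i one_mem)
  simpa using (hf P hP i).strategyproof hu h₀.1 h₁.2 (P i) (hP i) p' hp'

theorem eqOn_of_isClamp_update
    (hf : ∀ P : Fin n → ℝ, (∀ i, P i ∈ I) → ∀ i, IsClamp (fun t => f (update P i t)))
    (hg : ∀ P : Fin n → ℝ, (∀ i, P i ∈ I) → ∀ i, IsClamp (fun t => g (update P i t)))
    (hfg : ∀ P : Fin n → ℝ, (∀ i, P i = 0 ∨ P i = 1) → f P = g P) :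
    EqOn f g {P | ∀ i, P i ∈ I} := by
  suffices ∀ s : Finset (Fin n), ∀ P : Fin n → ℝ, (∀ i, P i ∈ I) →
      (∀ i ∉ s, P i = 0 ∨ P i = 1) → f P = g P from fun P hP => this Finset.univ P hP (by simp)
  intro s
  induction s using Finset.induction_on with
  | empty => exact fun P _ hP => hfg P fun i => hP i (Finset.notMem_empty i)
  | insert i s _ ih =>
    intro P hP hPs
    have hsec : ∀ t, t = 0 ∨ t = 1 → f (update P i t) = g (update P i t) := by
      intro t ht
      have htI : t ∈ I := by rcases ht with rfl | rfl <;> simp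
      refine ih _ (update_mem_unitInterval hP i htI) fun j hj => ?_
      rcases eq_or_ne j i with rfl | hji
      · simpa using ht
      · simpa [hji] using hPs j (by simp [hji, hj])
    have hf' := (hf P hP i).2 (P i) (hP i)
    have hg' := (hg P hP i).2 (P i) (hP i)
    simp only [update_eq_self] at hf' hg'
    rw [hf', hg', hsec 0 (.inl rfl), hsec 1 (.inr rfl)]

def stepProfile (n k : ℕ) : Fin n → ℝ := fun i => if (i : ℕ) < k then 1 else 0

theorem stepProfile_eq_zero_or_eq_one (n k : ℕ) (i : Fin n) :
    stepProfile n k i = 0 ∨ stepProfile n k i = 1 := by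
  unfold stepProfile; split_ifs <;> simp

theorem stepProfile_mem_unitInterval (n k : ℕ) (i : Fin n) : stepProfile n k i ∈ I := by
  rcases stepProfile_eq_zero_or_eq_one n k i with h | h <;> simp [h]

theorem card_stepProfile_eq_one {k : ℕ} (hk : k ≤ n) : #{i | stepProfile n k i = 1} = k := by
  simp [stepProfile, Fin.card_filter_val_lt, hk]

theorem update_stepProfile (i : Fin n) :
    update (stepProfile n i) i 0 = stepProfile n i ∧
      update (stepProfile n i) i 1 = stepProfile n (i + 1) := by
  constructor <;> ext j <;> rcases eq_or_ne j i with rfl | hji <;>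
    simp_all [stepProfile, le_iff_lt_or_eq, Fin.val_inj]

theorem ofFn_perm_replicate_zero_append_replicate_one {P : Fin n → ℝ}
    (hP : ∀ i, P i = 0 ∨ P i = 1) :
    (List.ofFn P).Perm
      (List.replicate (n - #{i | P i = 1}) 0 ++ List.replicate #{i | P i = 1} 1) := by
  have hcount (x : ℝ) : (List.ofFn P).count x = #{i | P i = x} := List.countP_ofFn P (· = x)
  have hzero : #{i | P i = 0} + #{i | P i = 1} = n := by
    have : Finset.univ.filter (P · = 1) = Finset.univ.filter (¬P · = 0) :=
      Finset.filter_congr fun i _ => by rcases hP i with h | h <;> simp [h]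
    rw [this, Finset.card_filter_add_card_filter_not, Finset.card_univ, Fintype.card_fin]
  refine (List.perm_replicate_append_replicate zero_ne_one).2 ⟨?_, hcount 1, ?_⟩
  · rw [hcount]; omega
  · intro x hx
    obtain ⟨i, rfl⟩ := List.mem_ofFn.1 hx
    rcases hP i with h | h <;> simp [h]

theorem med_ofFn_stepProfile_append {a : Fin (n + 1) → ℝ} (ha : Monotone a)
    (haI : ∀ k, a k ∈ I) (k : Fin (n + 1)) :
    med (List.ofFn (stepProfile n k) ++ List.ofFn a) = a k := by
  have hk : (k : ℕ) ≤ n := Nat.lt_succ_iff.1 k.2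
  have hones : #{i : Fin n | (i : ℕ) < k} = k := by rw [Fin.card_filter_val_lt, min_eq_right hk]
  have hsplit := Finset.card_filter_add_card_filter_not (s := Finset.univ)
    (fun i : Fin n => (i : ℕ) < k)
  rw [Finset.card_univ, Fintype.card_fin] at hsplit
  refine med_eq_of_succ_le_countP (k := n)
    (by simp only [List.length_append, List.length_ofFn]; omega) ?_ ?_ <;>
    rw [List.countP_append, List.countP_ofFn]
  · have hle : #{i : Fin n | ¬(i : ℕ) < k} ≤ #{i | stepProfile n k i ≤ a k} :=
      Finset.card_le_card fun i hi => by
        simp only [Finset.mem_filter, Finset.mem_univ, true_and] at hi ⊢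
        simp [stepProfile, hi, (haI k).1]
    have := ha.succ_le_countP_le k
    omega
  · have hge : #{i : Fin n | (i : ℕ) < k} ≤ #{i | a k ≤ stepProfile n k i} :=
      Finset.card_le_card fun i hi => by
        simp only [Finset.mem_filter, Finset.mem_univ, true_and] at hi ⊢
        simp [stepProfile, hi, (haI k).2]
    have := ha.sub_le_countP_ge k
    omega

theorem monotone_apply_stepProfile
    (hf : ∀ P : Fin n → ℝ, (∀ i, P i ∈ I) → ∀ i, IsClamp (fun t => f (update P i t))) :
    Monotone fun k : Fin (n + 1) => f (stepProfile n k) :=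
  Fin.monotone_iff_le_succ.2 fun k => by
    simpa [update_stepProfile] using (hf _ (stepProfile_mem_unitInterval n k) k).1

theorem apply_eq_med_stepProfile
    (hanon : ∀ P : Fin n → ℝ, (∀ i, P i ∈ I) → ∀ τ : Equiv.Perm (Fin n), f (P ∘ τ) = f P)
    (hfr : ∀ P : Fin n → ℝ, (∀ i, P i ∈ I) → f P ∈ I)
    (hmono : Monotone fun k : Fin (n + 1) => f (stepProfile n k))
    {P : Fin n → ℝ} (hP : ∀ i, P i = 0 ∨ P i = 1) :
    f P = med (List.ofFn P ++ List.ofFn fun k : Fin (n + 1) => f (stepProfile n k)) := by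
  set c := #{i | P i = 1}
  have hcn : c ≤ n := Finset.card_le_univ _ |>.trans_eq (Fintype.card_fin n)
  have hperm : (List.ofFn P).Perm (List.ofFn (stepProfile n c)) := by
    have := ofFn_perm_replicate_zero_append_replicate_one (stepProfile_eq_zero_or_eq_one n c)
    rw [card_stepProfile_eq_one hcn] at this
    exact (ofFn_perm_replicate_zero_append_replicate_one hP).trans this.symm
  rw [med_perm (hperm.append_right _), med_ofFn_stepProfile_append hmono
    (fun k => hfr _ (stepProfile_mem_unitInterval n k)) ⟨c, Nat.lt_succ_of_le hcn⟩]
  exact apply_eq_apply_of_perm_ofFn hanon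
    (fun i => by rcases hP i with h | h <;> simp [h]) (stepProfile_mem_unitInterval n c) hperm

end Mechanism

end

/-- for two alternatives and an arbitrary single-peaked domain, a continuous
mechanism is anonymous and strategyproof iff it is a generalized median rule with
`n + 1` phantoms `α₀ ≤ … ≤ αₙ` in `[0,1]`. -/
theorem generalized_median_characterization {n : ℕ}
    (u : ℝ → ℝ → ℝ) (hu : ∀ p ∈ Set.Icc (0:ℝ) 1, SinglePeaked p (u p))
    (f : (Fin n → ℝ) → ℝ)
    (hfr : ∀ P : Fin n → ℝ, (∀ i, P i ∈ Set.Icc (0:ℝ) 1) → f P ∈ Set.Icc (0:ℝ) 1)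
    (hfc : ContinuousOn f {P : Fin n → ℝ | ∀ i, P i ∈ Set.Icc (0:ℝ) 1}) :
    ((∀ P : Fin n → ℝ, (∀ i, P i ∈ Set.Icc (0:ℝ) 1) →
        ∀ σ : Equiv.Perm (Fin n), f (P ∘ σ) = f P) ∧
      (∀ P : Fin n → ℝ, (∀ i, P i ∈ Set.Icc (0:ℝ) 1) → ∀ i, ∀ p' ∈ Set.Icc (0:ℝ) 1,
        u (P i) (f (Function.update P i p')) ≤ u (P i) (f P))) ↔
      ∃ a : Fin (n + 1) → ℝ, (∀ k, a k ∈ Set.Icc (0:ℝ) 1) ∧ Monotone a ∧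
        ∀ P : Fin n → ℝ, (∀ i, P i ∈ Set.Icc (0:ℝ) 1) →
          f P = med (List.ofFn P ++ List.ofFn a) := by
  constructor
  · rintro ⟨hanon, hsp⟩
    have hclamp := fun P hP i => isClamp_update_of_strategyproof hu hfr hfc hsp (P := P) hP i
    have hmono := monotone_apply_stepProfile hclamp
    refine ⟨_, fun k => hfr _ (stepProfile_mem_unitInterval n k), hmono, ?_⟩
    exact eqOn_of_isClamp_update hclamp (fun P _ i => isClamp_med_update _ P i)
      fun P hP => apply_eq_med_stepProfile hanon hfr hmono hP
  · rintro ⟨a, -, -, hfa⟩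
    have hclamp : ∀ P : Fin n → ℝ, (∀ i, P i ∈ Icc (0:ℝ) 1) → ∀ i,
        IsClamp (fun t => f (update P i t)) := fun P hP i =>
      (isClamp_med_update a P i).congr fun t ht => (hfa _ (update_mem_unitInterval hP i ht)).symm
    refine ⟨fun P hP σ => ?_, strategyproof_of_isClamp_update hu hfr hclamp⟩
    rw [hfa (P ∘ σ) fun i => hP (σ i), hfa P hP]
    exact med_perm ((σ.ofFn_comp_perm P).append_right _)
end

section
/- Let m ≥ 3 and n ≥ 3, and suppose each agent with peak p evaluates distributions by the ℓ1 utility u_p(q) = −∑_j |p_j − q_j|. Then there is no mechanism f : (Δ^m)^n → Δ^m that simultaneously satisfies efficiency, strategyproofness, and proportionality. -/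
/-!
Write `δ_j` for the point mass at `j` and `twoPoint a c t = t δ_a + (1 - t) δ_c`. On the simplex
the ℓ1 distance `‖p - q‖₁` equals `2 ∑ⱼ (pⱼ - qⱼ)⁺`, which makes all distances below explicit.

Fix distinct alternatives `a, b, c` and `0 ≤ A < 1/n`. If one agent reports `twoPoint a c A`,
another `δ_b` and all others `δ_c`, the outcome must be `twoPoint b c (1/n)`, the proportional
outcome of the profile in which the first agent reports `δ_c` instead: strategyproofness for that
agent, once with true peak `δ_c` and once with true peak `twoPoint a c A`, pins the mass on `c` to
`1 - 1/n`, and efficiency (moving mass from any other alternative towards `c` is a Pareto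
improvement while `c` gets less than `1 - A`) leaves no mass outside `{b, c}`.

Now let agent 1 report `twoPoint b c A` and agent 2 report `twoPoint a c A`. Deviating to `δ_b`,
resp. `δ_a`, yields `twoPoint b c (1/n)`, resp. `twoPoint a c (1/n)`, at distance `2(1/n - A)`
from the true peak, so by strategyproofness the outcome is within `2(1/n - A)` of both peaks.
These are `2A` apart, hence `2A ≤ 4(1/n - A)`, which fails for `A > 2/(3n)`.
-/

/-- ℓ1 utility of an agent with peak `p` at distribution `q`. -/
def l1u {m : ℕ} (p q : Fin m → ℝ) : ℝ := -∑ j, |p j - q j|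

open Function Finset

theorem forall_update_mem {ι α : Type*} [DecidableEq ι] {S : Set α} {P : ι → α}
    (hP : ∀ i, P i ∈ S) (i : ι) {p : α} (hp : p ∈ S) : ∀ k, update P i p k ∈ S :=
  (forall_update_iff P fun _ x => x ∈ S).2 ⟨hp, fun k _ => hP k⟩

variable {m n : ℕ}

noncomputable def twoPoint (a b : Fin m) (t : ℝ) : Fin m → ℝ := Pi.single a t + Pi.single b (1 - t)

theorem twoPoint_mem_stdSimplex (a b : Fin m) {t : ℝ} (ht₀ : 0 ≤ t) (ht₁ : t ≤ 1) :
    twoPoint a b t ∈ stdSimplex ℝ (Fin m) := by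
  refine ⟨fun j => ?_, ?_⟩
  · simp only [twoPoint, Pi.add_apply, Pi.single_apply]
    split_ifs <;> linarith
  · simp [twoPoint, sum_add_distrib]

@[simp]
theorem twoPoint_apply_left {a b : Fin m} (hab : a ≠ b) (t : ℝ) : twoPoint a b t a = t := by
  simp [twoPoint, hab]

@[simp]
theorem twoPoint_apply_right {a b : Fin m} (hab : a ≠ b) (t : ℝ) : twoPoint a b t b = 1 - t := by
  simp [twoPoint, hab.symm]

theorem twoPoint_apply_of_ne {a b j : Fin m} (hja : j ≠ a) (hjb : j ≠ b) (t : ℝ) :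
    twoPoint a b t j = 0 := by
  simp [twoPoint, hja, hjb]

theorem eq_twoPoint_of_eq_zero {q : Fin m → ℝ} (hq : q ∈ stdSimplex ℝ (Fin m)) {a b : Fin m}
    (hab : a ≠ b) (hq₀ : ∀ j, j ≠ a → j ≠ b → q j = 0) {t : ℝ} (hqb : q b = 1 - t) :
    q = twoPoint a b t := by
  have hsum : q a + q b = 1 := by
    rw [← hq.2, Fintype.sum_eq_add a b hab fun j hj => hq₀ j hj.1 hj.2]
  funext j
  by_cases hja : j = a
  · subst hja
    rw [twoPoint_apply_left hab]
    linarith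
  by_cases hjb : j = b
  · rw [hjb, twoPoint_apply_right hab, hqb]
  · rw [twoPoint_apply_of_ne hja hjb, hq₀ j hja hjb]

theorem l1u_eq_neg_two_mul_sum_posPart {p q : Fin m → ℝ} (hp : p ∈ stdSimplex ℝ (Fin m))
    (hq : q ∈ stdSimplex ℝ (Fin m)) : l1u p q = -2 * ∑ j, (p j - q j)⁺ := by
  have hsum : ∑ j, (p j - q j) = 0 := by rw [sum_sub_distrib, hp.2, hq.2, sub_self]
  have habs (x : ℝ) : |x| = 2 * x⁺ - x := by
    linarith [posPart_add_negPart x, posPart_sub_negPart x]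
  simp only [l1u, habs, sum_sub_distrib, ← mul_sum, hsum]
  ring

theorem l1u_single {q : Fin m → ℝ} (hq : q ∈ stdSimplex ℝ (Fin m)) (c : Fin m) :
    l1u (Pi.single c 1) q = -2 * (1 - q c) := by
  rw [l1u_eq_neg_two_mul_sum_posPart (single_mem_stdSimplex ℝ c) hq, Fintype.sum_eq_single c]
  · simp [(mem_Icc_of_mem_stdSimplex hq c).2]
  · intro j hj
    simp [hj, hq.1 j]

theorem l1u_twoPoint {a c : Fin m} (hac : a ≠ c) {t : ℝ} (ht₀ : 0 ≤ t) (ht₁ : t ≤ 1)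
    {q : Fin m → ℝ} (hq : q ∈ stdSimplex ℝ (Fin m)) :
    l1u (twoPoint a c t) q = -2 * ((t - q a)⁺ + (1 - t - q c)⁺) := by
  rw [l1u_eq_neg_two_mul_sum_posPart (twoPoint_mem_stdSimplex a c ht₀ ht₁) hq,
    Fintype.sum_eq_add a c hac]
  · simp [twoPoint, hac, hac.symm]
  · rintro j ⟨hja, hjc⟩
    simp [twoPoint, hja, hjc, hq.1 j]

theorem l1u_twoPoint_twoPoint_of_le {a c : Fin m} (hac : a ≠ c) {s t : ℝ} (hs₀ : 0 ≤ s)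
    (hst : s ≤ t) (ht₁ : t ≤ 1) : l1u (twoPoint a c s) (twoPoint a c t) = -2 * (t - s) := by
  rw [l1u_twoPoint hac hs₀ (hst.trans ht₁) (twoPoint_mem_stdSimplex a c (hs₀.trans hst) ht₁)]
  simp [twoPoint, hac, hac.symm, hst]

theorem l1u_twoPoint_twoPoint_of_ne {a b c : Fin m} (hab : a ≠ b) (hac : a ≠ c) (hbc : b ≠ c)
    {t : ℝ} (ht₀ : 0 ≤ t) (ht₁ : t ≤ 1) : l1u (twoPoint a c t) (twoPoint b c t) = -2 * t := by
  rw [l1u_twoPoint hac ht₀ ht₁ (twoPoint_mem_stdSimplex b c ht₀ ht₁)]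
  simp [twoPoint, hab, hac, hbc.symm, ht₀]

theorem l1u_add_l1u_le (p q r : Fin m → ℝ) : l1u p q + l1u r q ≤ l1u p r := by
  simp only [l1u, ← neg_add, neg_le_neg_iff, ← sum_add_distrib]
  gcongr with j
  rw [abs_sub_comm (r j)]
  exact abs_sub_le _ _ _

noncomputable def moveMass (q : Fin m → ℝ) (j c : Fin m) (ε : ℝ) : Fin m → ℝ :=
  q + Pi.single c ε - Pi.single j ε

theorem moveMass_mem_stdSimplex {q : Fin m → ℝ} (hq : q ∈ stdSimplex ℝ (Fin m)) {j c : Fin m}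
    (hjc : j ≠ c) {ε : ℝ} (hε : 0 ≤ ε) (hεj : ε ≤ q j) :
    moveMass q j c ε ∈ stdSimplex ℝ (Fin m) := by
  refine ⟨fun l => ?_, ?_⟩
  · simp only [moveMass, Pi.add_apply, Pi.sub_apply, Pi.single_apply]
    split_ifs with hlc hlj <;> subst_vars <;> linarith [hq.1 l]
  · simp [moveMass, sum_add_distrib, sum_sub_distrib, hq.2]

theorem l1u_moveMass (p q : Fin m → ℝ) {j c : Fin m} (hjc : j ≠ c) (ε : ℝ) :
    l1u p (moveMass q j c ε) =
      l1u p q + (|p j - q j| - |p j - q j + ε|) + (|p c - q c| - |p c - q c - ε|) := by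
  have hdiff : ∑ l, (|p l - q l| - |p l - (moveMass q j c ε) l|) =
      (|p j - q j| - |p j - q j + ε|) + (|p c - q c| - |p c - q c - ε|) := by
    rw [Fintype.sum_eq_add j c hjc]
    · simp [moveMass, hjc, hjc.symm, ← sub_add, ← sub_sub]
    · rintro l ⟨hlj, hlc⟩
      simp [moveMass, hlj, hlc]
  rw [add_assoc, ← hdiff, sum_sub_distrib]
  simp only [l1u]
  ring

def IsParetoImprovement (P : Fin n → Fin m → ℝ) (q q' : Fin m → ℝ) : Prop :=
  (∀ i, l1u (P i) q ≤ l1u (P i) q') ∧ ∃ i, l1u (P i) q < l1u (P i) q'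

theorem isParetoImprovement_moveMass {P : Fin n → Fin m → ℝ} {q : Fin m → ℝ} {j c : Fin m}
    (hjc : j ≠ c) {ε : ℝ} (hε : 0 < ε) (hεj : ε ≤ q j)
    (hP : ∀ i, P i j = 0 ∨ ε ≤ P i c - q c) {i₀ : Fin n} (hi₀j : P i₀ j = 0)
    (hi₀c : ε ≤ P i₀ c - q c) :
    IsParetoImprovement P q (moveMass q j c ε) := by
  have gain_j {p : Fin m → ℝ} (hpj : p j = 0) : |p j - q j| - |p j - q j + ε| = ε := by
    rw [hpj, abs_of_nonpos (by linarith), abs_of_nonpos (by linarith)]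
    ring
  have gain_c {p : Fin m → ℝ} (hpc : ε ≤ p c - q c) : |p c - q c| - |p c - q c - ε| = ε := by
    rw [abs_of_nonneg (by linarith), abs_of_nonneg (by linarith)]
    ring
  have loss_j (p : Fin m → ℝ) : -ε ≤ |p j - q j| - |p j - q j + ε| := by
    linarith [abs_add_le (p j - q j) ε, abs_of_pos hε]
  have loss_c (p : Fin m → ℝ) : -ε ≤ |p c - q c| - |p c - q c - ε| := by
    linarith [abs_sub (p c - q c) ε, abs_of_pos hε]
  refine ⟨fun i => ?_, i₀, ?_⟩
  · rw [l1u_moveMass _ _ hjc]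
    rcases hP i with hij | hic
    · linarith [gain_j hij, loss_c (P i)]
    · linarith [gain_c hic, loss_j (P i)]
  · rw [l1u_moveMass _ _ hjc]
    linarith [gain_j hi₀j, gain_c hi₀c]

def IsMechanism (f : (Fin n → Fin m → ℝ) → (Fin m → ℝ)) : Prop :=
  ∀ P : Fin n → Fin m → ℝ, (∀ i, P i ∈ stdSimplex ℝ (Fin m)) → f P ∈ stdSimplex ℝ (Fin m)

def IsEfficient (f : (Fin n → Fin m → ℝ) → (Fin m → ℝ)) : Prop :=
  ∀ P : Fin n → Fin m → ℝ, (∀ i, P i ∈ stdSimplex ℝ (Fin m)) →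
    ¬ ∃ q' ∈ stdSimplex ℝ (Fin m), IsParetoImprovement P (f P) q'

def IsStrategyproof (f : (Fin n → Fin m → ℝ) → (Fin m → ℝ)) : Prop :=
  ∀ P : Fin n → Fin m → ℝ, (∀ i, P i ∈ stdSimplex ℝ (Fin m)) →
    ∀ i, ∀ p' ∈ stdSimplex ℝ (Fin m), l1u (P i) (f (update P i p')) ≤ l1u (P i) (f P)

def IsProportional (f : (Fin n → Fin m → ℝ) → (Fin m → ℝ)) : Prop :=
  ∀ P : Fin n → Fin m → ℝ, (∀ i, P i ∈ stdSimplex ℝ (Fin m)) →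
    (∀ i, ∃ j, P i = Pi.single j 1) →
    ∀ j, f P j = ((Finset.univ.filter (fun i => P i j = 1)).card : ℝ) / (n : ℝ)

variable {f : (Fin n → Fin m → ℝ) → (Fin m → ℝ)}

theorem IsProportional.apply_update_const (hprop : IsProportional f) {b c : Fin m}
    (hbc : b ≠ c) (s : Fin n) :
    f (update (fun _ => Pi.single c 1) s (Pi.single b 1)) = twoPoint b c (n : ℝ)⁻¹ := by
  set B : Fin n → Fin m → ℝ := update (fun _ => Pi.single c 1) s (Pi.single b 1)
  have hB : ∀ i, ∃ k, B i = Pi.single k 1 := fun i => by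
    by_cases hi : i = s
    · exact ⟨b, by simp [B, hi]⟩
    · exact ⟨c, by simp [B, hi]⟩
  have hBmem := forall_update_mem (fun _ => single_mem_stdSimplex ℝ c) s
    (single_mem_stdSimplex ℝ b)
  have hn : (n : ℝ) ≠ 0 := by exact_mod_cast (Fin.pos s).ne'
  funext j
  rw [hprop B hBmem hB j]
  by_cases hjb : j = b
  · have : univ.filter (fun i => B i j = 1) = {s} := by
      ext i; by_cases hi : i = s <;> simp [B, hi, hjb, hbc.symm]
    rw [this, card_singleton, hjb, twoPoint_apply_left hbc, Nat.cast_one, one_div]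
  by_cases hjc : j = c
  · have : univ.filter (fun i => B i j = 1) = univ.erase s := by
      ext i; by_cases hi : i = s <;> simp [B, hi, hjc, hbc]
    rw [this, card_erase_of_mem (mem_univ s), card_univ, Fintype.card_fin,
      Nat.cast_sub (Fin.pos s), hjc, twoPoint_apply_right hbc, Nat.cast_one, sub_div,
      div_self hn, one_div]
  · have : univ.filter (fun i => B i j = 1) = ∅ := by
      ext i; by_cases hi : i = s <;> simp [B, hi, hjb, hjc]
    rw [this, card_empty, Nat.cast_zero, zero_div, twoPoint_apply_of_ne hjb hjc]

theorem IsStrategyproof.apply_update_le (hsp : IsStrategyproof f) (hmech : IsMechanism f)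
    {B : Fin n → Fin m → ℝ} (hB : ∀ i, B i ∈ stdSimplex ℝ (Fin m)) {s : Fin n} {c : Fin m}
    (hs : B s = Pi.single c 1) {p : Fin m → ℝ} (hp : p ∈ stdSimplex ℝ (Fin m)) :
    f (update B s p) c ≤ f B c := by
  have h := hsp B hB s p hp
  rw [hs, l1u_single (hmech _ (forall_update_mem hB s hp)), l1u_single (hmech B hB)] at h
  linarith

theorem IsEfficient.apply_eq_zero (heff : IsEfficient f) (hmech : IsMechanism f)
    {P : Fin n → Fin m → ℝ} (hP : ∀ i, P i ∈ stdSimplex ℝ (Fin m)) {j c : Fin m} (hjc : j ≠ c)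
    {θ : ℝ} (hθ : f P c < θ) (hPjc : ∀ i, P i j = 0 ∨ θ ≤ P i c) {i₀ : Fin n}
    (hi₀j : P i₀ j = 0) (hi₀c : θ ≤ P i₀ c) : f P j = 0 := by
  have hq := hmech P hP
  by_contra hj
  have hε : 0 < min (f P j) (θ - f P c) := lt_min ((hq.1 j).lt_of_ne' hj) (by linarith)
  refine heff P hP ⟨_, moveMass_mem_stdSimplex hq hjc hε.le (min_le_left _ _),
    isParetoImprovement_moveMass hjc hε (min_le_left _ _) (fun i => ?_) hi₀j ?_⟩
  · exact (hPjc i).imp_right fun h => by linarith [min_le_right (f P j) (θ - f P c)]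
  · linarith [min_le_right (f P j) (θ - f P c)]

theorem apply_update_update_twoPoint (hmech : IsMechanism f) (heff : IsEfficient f)
    (hsp : IsStrategyproof f) (hprop : IsProportional f) {s₀ s₁ s₂ : Fin n} (h₀₁ : s₀ ≠ s₁)
    (h₀₂ : s₀ ≠ s₂) (h₁₂ : s₁ ≠ s₂) {a b c : Fin m} (hab : a ≠ b) (hac : a ≠ c) (hbc : b ≠ c)
    {A : ℝ} (hA₀ : 0 ≤ A) (hA : A < (n : ℝ)⁻¹) :
    f (update (update (fun _ => Pi.single c 1) s₂ (Pi.single b 1)) s₁ (twoPoint a c A)) =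
      twoPoint b c (n : ℝ)⁻¹ := by
  set B : Fin n → Fin m → ℝ := update (fun _ => Pi.single c 1) s₂ (Pi.single b 1)
  set Y := update B s₁ (twoPoint a c A)
  have hn₁ : (n : ℝ)⁻¹ ≤ 1 := inv_le_one_of_one_le₀ (by exact_mod_cast Fin.pos s₀)
  have hA₁ : A ≤ 1 := hA.le.trans hn₁
  have hμ := twoPoint_mem_stdSimplex a c hA₀ hA₁
  have hB := forall_update_mem (fun _ => single_mem_stdSimplex ℝ c) s₂ (single_mem_stdSimplex ℝ b)
  have hY := forall_update_mem hB s₁ hμ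
  have hfB := hprop.apply_update_const hbc s₂
  have hBs₁ : B s₁ = Pi.single c 1 := by simp [B, h₁₂]
  have hc_le : f Y c ≤ 1 - (n : ℝ)⁻¹ := by
    have h := hsp.apply_update_le hmech hB hBs₁ hμ
    rwa [hfB, twoPoint_apply_right hbc] at h
  have hsupp : ∀ j, j ≠ b → j ≠ c → f Y j = 0 := by
    intro j hjb hjc
    refine heff.apply_eq_zero hmech hY hjc (θ := 1 - A) (by linarith) (fun i => ?_)
      (i₀ := s₀) ?_ ?_
    · by_cases hi : i = s₁
      · right; simp [hi, twoPoint_apply_right hac]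
      · left; by_cases hi' : i = s₂ <;> simp [hi, hi', h₁₂.symm, hjb, hjc]
    · simp [h₀₁, h₀₂, hjc]
    · simp [h₀₁, h₀₂, hA₀]
  have hc_ge : 1 - (n : ℝ)⁻¹ ≤ f Y c := by
    have hYB : update Y s₁ (Pi.single c 1) = B := by
      simp only [Y, update_idem]
      exact hBs₁ ▸ update_eq_self s₁ B
    have h := hsp Y hY s₁ _ (single_mem_stdSimplex ℝ c)
    rw [hYB, hfB, show Y s₁ = twoPoint a c A from update_self .., l1u_twoPoint hac hA₀ hA₁
      (hmech Y hY), l1u_twoPoint hac hA₀ hA₁ (twoPoint_mem_stdSimplex b c (by positivity) hn₁),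
      hsupp a hab hac, twoPoint_apply_of_ne hab hac, twoPoint_apply_right hbc, sub_zero,
      posPart_eq_self.2 hA₀, posPart_eq_self.2 (show 0 ≤ 1 - A - (1 - (n : ℝ)⁻¹) by linarith)] at h
    linarith [le_posPart (1 - A - f Y c)]
  exact eq_twoPoint_of_eq_zero (hmech Y hY) hbc hsupp (le_antisymm hc_le hc_ge)

/-- with ℓ1 utilities, for `m ≥ 3` alternatives and `n ≥ 3` agents, no
mechanism satisfies efficiency, strategyproofness, and proportionality. -/
theorem l1_impossibility {m n : ℕ} (hm : 3 ≤ m) (hn : 3 ≤ n) :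
    ¬ ∃ f : (Fin n → Fin m → ℝ) → (Fin m → ℝ),
      -- f is a mechanism: it maps profiles of distributions to distributions
      (∀ P : Fin n → Fin m → ℝ, (∀ i, P i ∈ stdSimplex ℝ (Fin m)) →
        f P ∈ stdSimplex ℝ (Fin m)) ∧
      -- efficiency
      (∀ P : Fin n → Fin m → ℝ, (∀ i, P i ∈ stdSimplex ℝ (Fin m)) →
        ¬ ∃ q' ∈ stdSimplex ℝ (Fin m),
          (∀ i, l1u (P i) (f P) ≤ l1u (P i) q') ∧ (∃ i, l1u (P i) (f P) < l1u (P i) q')) ∧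
      -- strategyproofness
      (∀ P : Fin n → Fin m → ℝ, (∀ i, P i ∈ stdSimplex ℝ (Fin m)) →
        ∀ i, ∀ p' ∈ stdSimplex ℝ (Fin m),
          l1u (P i) (f (Function.update P i p')) ≤ l1u (P i) (f P)) ∧
      -- proportionality
      (∀ P : Fin n → Fin m → ℝ, (∀ i, P i ∈ stdSimplex ℝ (Fin m)) →
        (∀ i, ∃ j, P i = Pi.single j 1) →
        ∀ j, f P j = ((Finset.univ.filter (fun i => P i j = 1)).card : ℝ) / (n : ℝ)) := by
  rintro ⟨f, hmech, heff, hsp, hprop⟩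
  obtain ⟨a, b, c, hab, hac, hbc⟩ :=
    Fintype.two_lt_card_iff.1 (by rw [Fintype.card_fin]; omega : 2 < Fintype.card (Fin m))
  obtain ⟨i₀, i₁, i₂, h₀₁, h₀₂, h₁₂⟩ :=
    Fintype.two_lt_card_iff.1 (by rw [Fintype.card_fin]; omega : 2 < Fintype.card (Fin n))
  have hn₀ : (0 : ℝ) < (n : ℝ)⁻¹ := inv_pos.2 (by positivity)
  have hn₁ : (n : ℝ)⁻¹ ≤ 1 := inv_le_one_of_one_le₀ (by exact_mod_cast (by omega : 1 ≤ n))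
  set A : ℝ := 3 / 4 * (n : ℝ)⁻¹ with hA_def
  have hA₀ : 0 ≤ A := by positivity
  have hA : A < (n : ℝ)⁻¹ := by linarith
  set X : Fin n → Fin m → ℝ :=
    update (update (fun _ => Pi.single c 1) i₁ (twoPoint b c A)) i₂ (twoPoint a c A)
  have hX : ∀ i, X i ∈ stdSimplex ℝ (Fin m) :=
    forall_update_mem (forall_update_mem (fun _ => single_mem_stdSimplex ℝ c) i₁
      (twoPoint_mem_stdSimplex b c hA₀ (hA.le.trans hn₁))) i₂
      (twoPoint_mem_stdSimplex a c hA₀ (hA.le.trans hn₁))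
  have hf₁ : f (update X i₁ (Pi.single b 1)) = twoPoint b c (n : ℝ)⁻¹ := by
    rw [update_comm h₁₂.symm, update_idem]
    exact apply_update_update_twoPoint hmech heff hsp hprop h₀₂ h₀₁ h₁₂.symm hab hac hbc hA₀ hA
  have hf₂ : f (update X i₂ (Pi.single a 1)) = twoPoint a c (n : ℝ)⁻¹ := by
    rw [update_idem, update_comm h₁₂]
    exact apply_update_update_twoPoint hmech heff hsp hprop h₀₁ h₀₂ h₁₂ hab.symm hbc hac hA₀ hA
  have hsp₁ := hsp X hX i₁ _ (single_mem_stdSimplex ℝ b)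
  have hsp₂ := hsp X hX i₂ _ (single_mem_stdSimplex ℝ a)
  rw [hf₁, show X i₁ = twoPoint b c A by simp [X, h₁₂],
    l1u_twoPoint_twoPoint_of_le hbc hA₀ hA.le hn₁] at hsp₁
  rw [hf₂, show X i₂ = twoPoint a c A by simp [X],
    l1u_twoPoint_twoPoint_of_le hac hA₀ hA.le hn₁] at hsp₂
  have htri := l1u_add_l1u_le (twoPoint b c A) (f X) (twoPoint a c A)
  rw [l1u_twoPoint_twoPoint_of_ne hab.symm hbc hac hA₀ (hA.le.trans hn₁)] at htri
  linarith
end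

section
/- Let m ≥ 3 and n ≥ 3, and suppose each agent with peak p evaluates distributions by the ℓ∞ utility u_p(q) = −max_j |p_j − q_j|. Then there is no mechanism f : (Δ^m)^n → Δ^m that simultaneously satisfies efficiency, strategyproofness, and proportionality. -/
/-- ℓ∞ utility of an agent with peak `p` at distribution `q`. -/
noncomputable def linfu {m : ℕ} (p q : Fin m → ℝ) : ℝ := -⨆ j, |p j - q j|

noncomputable def DD {m : ℕ} (p q : Fin m → ℝ) : ℝ := ⨆ j, |p j - q j|

lemma linfu_eq_neg_DD {m : ℕ} (p q : Fin m → ℝ) : linfu p q = -DD p q := rfl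

lemma DD_coord {m : ℕ} (hm : 0 < m) (p q : Fin m → ℝ) (j : Fin m) :
    |p j - q j| ≤ DD p q := by
  haveI : Nonempty (Fin m) := ⟨⟨0, hm⟩⟩
  exact le_ciSup ((Set.finite_range (fun j => |p j - q j|)).bddAbove) j

lemma DD_le {m : ℕ} (hm : 0 < m) {p q : Fin m → ℝ} {c : ℝ}
    (h : ∀ j, |p j - q j| ≤ c) : DD p q ≤ c := by
  haveI : Nonempty (Fin m) := ⟨⟨0, hm⟩⟩
  exact ciSup_le h

lemma linfu_le_iff {m : ℕ} {p q r : Fin m → ℝ} : linfu p q ≤ linfu p r ↔ DD p r ≤ DD p q := by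
  simp [linfu_eq_neg_DD]

lemma linfu_lt_iff {m : ℕ} {p q r : Fin m → ℝ} : linfu p q < linfu p r ↔ DD p r < DD p q := by
  simp [linfu_eq_neg_DD]

lemma sum_split3 {m : ℕ} (a b c : Fin m) (hab : a ≠ b) (hac : a ≠ c) (hbc : b ≠ c)
    (x : Fin m → ℝ) :
    ∑ j, x j = x a + x b + x c + ∑ j ∈ ((Finset.univ.erase a).erase b).erase c, x j := by
  have hb : b ∈ Finset.univ.erase a := Finset.mem_erase.mpr ⟨hab.symm, Finset.mem_univ b⟩
  have hc : c ∈ (Finset.univ.erase a).erase b :=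
    Finset.mem_erase.mpr ⟨hbc.symm, Finset.mem_erase.mpr ⟨hac.symm, Finset.mem_univ c⟩⟩
  rw [← Finset.add_sum_erase _ x (Finset.mem_univ a), ← Finset.add_sum_erase _ x hb,
      ← Finset.add_sum_erase _ x hc]
  ring

lemma sum_split2 {m : ℕ} (a b : Fin m) (hab : a ≠ b) (x : Fin m → ℝ) :
    ∑ j, x j = x a + x b + ∑ j ∈ (Finset.univ.erase a).erase b, x j := by
  have hb : b ∈ Finset.univ.erase a := Finset.mem_erase.mpr ⟨hab.symm, Finset.mem_univ b⟩
  rw [← Finset.add_sum_erase _ x (Finset.mem_univ a), ← Finset.add_sum_erase _ x hb]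
  ring

lemma coord_le_one {m : ℕ} {x : Fin m → ℝ} (hx : x ∈ stdSimplex ℝ (Fin m)) (k : Fin m) :
    x k ≤ 1 := by
  have h := Finset.single_le_sum (fun i _ => hx.1 i) (Finset.mem_univ k)
  rw [hx.2] at h; exact h

lemma pair_le_one {m : ℕ} {x : Fin m → ℝ} (hx : x ∈ stdSimplex ℝ (Fin m)) {j k : Fin m}
    (hjk : j ≠ k) : x j + x k ≤ 1 := by
  have h := sum_split2 j k hjk x
  rw [hx.2] at h
  have : 0 ≤ ∑ i ∈ (Finset.univ.erase j).erase k, x i :=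
    Finset.sum_nonneg (fun i _ => hx.1 i)
  linarith

lemma DD_single {m : ℕ} (hm : 0 < m) {x : Fin m → ℝ} (hx : x ∈ stdSimplex ℝ (Fin m))
    (k : Fin m) : DD (Pi.single k 1) x = 1 - x k := by
  apply le_antisymm
  · apply DD_le hm
    intro j
    by_cases hj : j = k
    · subst hj
      rw [Pi.single_apply, if_pos rfl, abs_of_nonneg (by linarith [coord_le_one hx j])]
    · rw [Pi.single_apply, if_neg hj, zero_sub, abs_neg, abs_of_nonneg (hx.1 j)]
      linarith [pair_le_one hx hj]
  · have h := DD_coord hm (Pi.single k 1) x k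
    rw [Pi.single_apply, if_pos rfl, abs_of_nonneg (by linarith [coord_le_one hx k])] at h
    exact h

/-- The key efficiency lemma: if all peaks are among `e_a`, `v = (1-θ)e_a + θe_b`, `e_c`,
with at least one agent at `e_a`, then an efficient outcome puts no mass outside `{a,b,c}`
and satisfies `q b = 0 ∨ q b + q c ≤ θ`. -/
lemma dominator_lemma {m n : ℕ} (hm : 0 < m)
    (a b c : Fin m) (hab : a ≠ b) (hac : a ≠ c) (hbc : b ≠ c)
    (θ : ℝ) (hθ0 : 0 < θ)
    (P : Fin n → Fin m → ℝ)
    (hP : ∀ i, P i = Pi.single a 1 ∨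
      P i = (fun j => if j = a then 1-θ else if j = b then θ else 0) ∨ P i = Pi.single c 1)
    (i₀ : Fin n) (hi₀ : P i₀ = Pi.single a 1)
    (q : Fin m → ℝ) (hq : q ∈ stdSimplex ℝ (Fin m))
    (heff : ¬ ∃ q' ∈ stdSimplex ℝ (Fin m),
        (∀ i, linfu (P i) q ≤ linfu (P i) q') ∧ (∃ i, linfu (P i) q < linfu (P i) q')) :
    (∀ j, j ≠ a → j ≠ b → j ≠ c → q j = 0) ∧ (q b = 0 ∨ q b + q c ≤ θ) := by
  set v : Fin m → ℝ := (fun j => if j = a then 1-θ else if j = b then θ else 0) with hv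
  set S : Finset (Fin m) := ((Finset.univ.erase a).erase b).erase c with hS
  set R : ℝ := ∑ j ∈ S, q j with hR
  have hR0 : 0 ≤ R := Finset.sum_nonneg (fun i _ => hq.1 i)
  have hsum : q a + q b + q c + R = 1 := by
    have := sum_split3 a b c hab hac hbc q
    rw [hq.2] at this; linarith
  have key : ¬ ((∃ j, j ≠ a ∧ j ≠ b ∧ j ≠ c ∧ q j ≠ 0) ∨ (q b ≠ 0 ∧ θ < q b + q c)) := by
    intro hbad
    set qb' : ℝ := min (q b) (max (θ - q c) 0) with hqb'
    have hqb'0 : 0 ≤ qb' := le_min (hq.1 b) (le_max_right _ _)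
    have hqb'le : qb' ≤ q b := min_le_left _ _
    -- global trichotomy for qb'
    have htri : (qb' = 0 ∧ θ ≤ q c) ∨ (qb' = q b ∧ q b + q c ≤ θ) ∨
        (qb' = θ - q c ∧ θ - q c ≤ q b ∧ q c ≤ θ) := by
      rcases le_total θ (q c) with h1 | h1
      · left
        refine ⟨?_, h1⟩
        rw [hqb', max_eq_right (by linarith), min_eq_right (hq.1 b)]
      · rcases le_total (q b) (θ - q c) with h2 | h2
        · right; left
          refine ⟨?_, by linarith⟩
          rw [hqb', max_eq_left (by linarith), min_eq_left h2]
        · right; right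
          refine ⟨?_, h2, h1⟩
          rw [hqb', max_eq_left (by linarith), min_eq_right h2]
    have hgap : 0 < (q b - qb') + R := by
      rcases hbad with ⟨j, hja, hjb, hjc, hj0⟩ | ⟨hb0, hbc'⟩
      · have hjS : j ∈ S := by
          simp only [hS, Finset.mem_erase, Finset.mem_univ, and_true]
          exact ⟨hjc, hjb, hja⟩
        have hqj : 0 < q j := lt_of_le_of_ne (hq.1 j) (Ne.symm hj0)
        have : q j ≤ R := Finset.single_le_sum (fun i _ => hq.1 i) hjS
        linarith
      · have hqb : 0 < q b := lt_of_le_of_ne (hq.1 b) (Ne.symm hb0)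
        rcases htri with ⟨he, h1⟩ | ⟨he, h1⟩ | ⟨he, h1, h2⟩ <;> rw [he] <;> linarith [hq.1 c]
    set q' : Fin m → ℝ :=
      (fun j => if j = a then 1 - qb' - q c else if j = b then qb' else if j = c then q c else 0)
      with hq'
    have hq'a : q' a = 1 - qb' - q c := by simp [hq']
    have hq'b : q' b = qb' := by simp [hq', Ne.symm hab]
    have hq'c : q' c = q c := by simp [hq', Ne.symm hac, Ne.symm hbc]
    have hq'rest : ∀ j, j ≠ a → j ≠ b → j ≠ c → q' j = 0 := by
      intro j hja hjb hjc
      simp [hq', hja, hjb, hjc]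
    have haq : q a ≤ 1 - qb' - q c := by linarith
    have hq'mem : q' ∈ stdSimplex ℝ (Fin m) := by
      constructor
      · intro j
        by_cases hja : j = a
        · rw [hja, hq'a]; linarith [hq.1 a]
        · by_cases hjb : j = b
          · rw [hjb, hq'b]; exact hqb'0
          · by_cases hjc : j = c
            · rw [hjc, hq'c]; exact hq.1 c
            · rw [hq'rest j hja hjb hjc]
      · rw [sum_split3 a b c hab hac hbc q', hq'a, hq'b, hq'c]
        have hz : ∑ j ∈ S, q' j = 0 := by
          apply Finset.sum_eq_zero
          intro j hj
          simp only [hS, Finset.mem_erase] at hj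
          exact hq'rest j hj.2.2.1 hj.2.1 hj.1
        rw [← hS, hz]; ring
    have hDa : DD (Pi.single a 1) q' < DD (Pi.single a 1) q := by
      rw [DD_single hm hq'mem a, DD_single hm hq a, hq'a]
      linarith
    have hDc : DD (Pi.single c 1) q' ≤ DD (Pi.single c 1) q := by
      rw [DD_single hm hq'mem c, DD_single hm hq c, hq'c]
    have hvaval : v a = 1 - θ := by simp [hv]
    have hvbval : v b = θ := by simp [hv, Ne.symm hab]
    have hvcval : v c = 0 := by simp [hv, Ne.symm hac, Ne.symm hbc]
    have hvb : |θ - q b| ≤ DD v q := by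
      have := DD_coord hm v q b; rwa [hvbval] at this
    have hqcDD : q c ≤ DD v q := by
      have := DD_coord hm v q c
      rwa [hvcval, zero_sub, abs_neg, abs_of_nonneg (hq.1 c)] at this
    have hDv : DD v q' ≤ DD v q := by
      apply DD_le hm
      intro j
      by_cases hja : j = a
      · rw [hja, hvaval, hq'a,
          show (1 - θ) - (1 - qb' - q c) = qb' + q c - θ by ring]
        rcases htri with ⟨he, h1⟩ | ⟨he, h1⟩ | ⟨he, h1, h2⟩
        · rw [he, show (0:ℝ) + q c - θ = q c - θ by ring,
            abs_of_nonneg (by linarith)]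
          linarith
        · rw [he, abs_of_nonpos (by linarith [hq.1 c]), neg_sub]
          rw [abs_of_nonneg (by linarith [hq.1 c])] at hvb
          linarith [hq.1 c]
        · rw [he, show (θ - q c) + q c - θ = (0:ℝ) by ring, abs_zero]
          linarith [hq.1 c]
      · by_cases hjb : j = b
        · rw [hjb, hvbval, hq'b]
          rcases htri with ⟨he, h1⟩ | ⟨he, h1⟩ | ⟨he, h1, h2⟩
          · rw [he, sub_zero, abs_of_nonneg hθ0.le]
            linarith
          · rw [he]; exact hvb
          · rw [he, show θ - (θ - q c) = q c by ring, abs_of_nonneg (hq.1 c)]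
            linarith
        · by_cases hjc : j = c
          · rw [hjc, hvcval, hq'c, zero_sub, abs_neg, abs_of_nonneg (hq.1 c)]
            linarith
          · rw [hq'rest j hja hjb hjc]
            have hvj : v j = 0 := by simp [hv, hja, hjb]
            rw [hvj, sub_zero, abs_zero]
            linarith [hq.1 c]
    apply heff
    refine ⟨q', hq'mem, ?_, ⟨i₀, ?_⟩⟩
    · intro i
      rw [linfu_le_iff]
      rcases hP i with h | h | h
      · rw [h]; exact le_of_lt hDa
      · rw [h]; exact hDv
      · rw [h]; exact hDc
    · rw [hi₀, linfu_lt_iff]; exact hDa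
  constructor
  · intro j hja hjb hjc
    by_contra h0
    exact key (Or.inl ⟨j, hja, hjb, hjc, h0⟩)
  · by_cases hb0 : q b = 0
    · exact Or.inl hb0
    · right
      by_contra h1
      exact key (Or.inr ⟨hb0, by linarith [not_le.mp h1]⟩)

lemma single_mem {m : ℕ} (k : Fin m) : Pi.single k (1:ℝ) ∈ stdSimplex ℝ (Fin m) := by
  constructor
  · intro j
    rw [Pi.single_apply]
    split <;> norm_num
  · have h : (∑ j, Pi.single k (1:ℝ) j) = ∑ j, if j = k then (1:ℝ) else 0 :=
      Finset.sum_congr rfl (fun j _ => by rw [Pi.single_apply])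
    rw [h, Finset.sum_ite_eq' Finset.univ k (fun _ => (1:ℝ))]
    simp

lemma vpt_mem {m : ℕ} (a b : Fin m) (hab : a ≠ b) (θ : ℝ) (h0 : 0 ≤ θ) (h1 : θ ≤ 1) :
    (fun j => if j = a then 1-θ else if j = b then θ else 0) ∈ stdSimplex ℝ (Fin m) := by
  constructor
  · intro j
    dsimp only
    split
    · linarith
    · split
      · linarith
      · exact le_refl 0
  · show (∑ j : Fin m, if j = a then 1-θ else if j = b then θ else 0) = 1
    rw [sum_split2 a b hab]
    rw [if_pos rfl, if_neg (Ne.symm hab), if_pos rfl]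
    have h3' : ∑ j ∈ (Finset.univ.erase a).erase b,
        (if j = a then 1-θ else if j = b then θ else 0) = 0 := by
      apply Finset.sum_eq_zero
      intro j hj
      simp only [Finset.mem_erase] at hj
      rw [if_neg hj.2.1, if_neg hj.1]
    rw [h3']
    ring

lemma prop_pin {m n : ℕ} (hn : 0 < n)
    (f : (Fin n → Fin m → ℝ) → (Fin m → ℝ))
    (hprop : ∀ P : Fin n → Fin m → ℝ, (∀ i, P i ∈ stdSimplex ℝ (Fin m)) →
        (∀ i, ∃ j, P i = Pi.single j 1) →
        ∀ j, f P j = ((Finset.univ.filter (fun i => P i j = 1)).card : ℝ) / (n : ℝ))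
    (k : Fin n) (i0 d : Fin m) (hd : d ≠ i0) :
    f (fun i => if i = k then Pi.single d 1 else Pi.single i0 1) i0 = 1 - 1/(n:ℝ) ∧
    f (fun i => if i = k then Pi.single d 1 else Pi.single i0 1) d = 1/(n:ℝ) ∧
    (∀ j, j ≠ i0 → j ≠ d →
      f (fun i => if i = k then Pi.single d 1 else Pi.single i0 1) j = 0) := by
  have hn0 : (n:ℝ) ≠ 0 := by positivity
  set Q : Fin n → Fin m → ℝ :=
    (fun i => if i = k then Pi.single d 1 else Pi.single i0 1) with hQdef
  have hQv : ∀ i, Q i ∈ stdSimplex ℝ (Fin m) := by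
    intro i
    by_cases h : i = k
    · simp only [hQdef]; rw [if_pos h]; exact single_mem d
    · simp only [hQdef]; rw [if_neg h]; exact single_mem i0
  have hQsm : ∀ i, ∃ j, Q i = Pi.single j 1 := by
    intro i
    by_cases h : i = k
    · exact ⟨d, by simp only [hQdef]; rw [if_pos h]⟩
    · exact ⟨i0, by simp only [hQdef]; rw [if_neg h]⟩
  have hF := hprop Q hQv hQsm
  refine ⟨?_, ?_, ?_⟩
  · have hfilter : Finset.univ.filter (fun i => Q i i0 = 1) = Finset.univ.erase k := by
      rw [← Finset.filter_ne' Finset.univ k]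
      apply Finset.filter_congr
      intro i _
      by_cases h : i = k
      · simp only [hQdef]
        rw [if_pos h, Pi.single_apply, if_neg (Ne.symm hd)]
        simp [h]
      · simp only [hQdef]
        rw [if_neg h, Pi.single_apply, if_pos rfl]
        simp [h]
    rw [hF i0, hfilter, Finset.card_erase_of_mem (Finset.mem_univ k), Finset.card_univ,
        Fintype.card_fin, Nat.cast_sub (by omega), Nat.cast_one, sub_div, div_self hn0]
  · have hfilter : Finset.univ.filter (fun i => Q i d = 1) = {k} := by
      have h1 : Finset.univ.filter (fun i => Q i d = 1) =
          Finset.univ.filter (fun i => i = k) := by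
        apply Finset.filter_congr
        intro i _
        by_cases h : i = k
        · simp only [hQdef]
          rw [if_pos h, Pi.single_apply, if_pos rfl]
          simp [h]
        · simp only [hQdef]
          rw [if_neg h, Pi.single_apply, if_neg hd]
          simp [h]
      rw [h1, Finset.filter_eq' Finset.univ k, if_pos (Finset.mem_univ k)]
    rw [hF d, hfilter, Finset.card_singleton, Nat.cast_one]
  · intro j hj0 hjd
    have hfilter : Finset.univ.filter (fun i => Q i j = 1) = ∅ := by
      apply Finset.filter_false_of_mem
      intro i _
      by_cases h : i = k
      · simp only [hQdef]
        rw [if_pos h, Pi.single_apply, if_neg hjd]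
        norm_num
      · simp only [hQdef]
        rw [if_neg h, Pi.single_apply, if_neg hj0]
        norm_num
    rw [hF j, hfilter, Finset.card_empty, Nat.cast_zero, zero_div]


set_option maxHeartbeats 1000000 in
/-- with ℓ∞ utilities, for `m ≥ 3` alternatives and `n ≥ 3` agents, no
mechanism satisfies efficiency, strategyproofness, and proportionality. -/
theorem linf_impossibility {m n : ℕ} (hm : 3 ≤ m) (hn : 3 ≤ n) :
    ¬ ∃ f : (Fin n → Fin m → ℝ) → (Fin m → ℝ),
      -- f is a mechanism: it maps profiles of distributions to distributions
      (∀ P : Fin n → Fin m → ℝ, (∀ i, P i ∈ stdSimplex ℝ (Fin m)) →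
        f P ∈ stdSimplex ℝ (Fin m)) ∧
      -- efficiency
      (∀ P : Fin n → Fin m → ℝ, (∀ i, P i ∈ stdSimplex ℝ (Fin m)) →
        ¬ ∃ q' ∈ stdSimplex ℝ (Fin m),
          (∀ i, linfu (P i) (f P) ≤ linfu (P i) q') ∧ (∃ i, linfu (P i) (f P) < linfu (P i) q')) ∧
      -- strategyproofness
      (∀ P : Fin n → Fin m → ℝ, (∀ i, P i ∈ stdSimplex ℝ (Fin m)) →
        ∀ i, ∀ p' ∈ stdSimplex ℝ (Fin m),
          linfu (P i) (f (Function.update P i p')) ≤ linfu (P i) (f P)) ∧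
      -- proportionality
      (∀ P : Fin n → Fin m → ℝ, (∀ i, P i ∈ stdSimplex ℝ (Fin m)) →
        (∀ i, ∃ j, P i = Pi.single j 1) →
        ∀ j, f P j = ((Finset.univ.filter (fun i => P i j = 1)).card : ℝ) / (n : ℝ)) := by
  rintro ⟨f, hmech, heff, hsp, hprop⟩
  have hm0 : 0 < m := by omega
  -- alternatives
  set i0 : Fin m := ⟨0, by omega⟩ with hi0def
  set i1 : Fin m := ⟨1, by omega⟩ with hi1def
  set i2 : Fin m := ⟨2, by omega⟩ with hi2def
  have h01 : i0 ≠ i1 := by simp [hi0def, hi1def, Fin.ext_iff]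
  have h02 : i0 ≠ i2 := by simp [hi0def, hi2def, Fin.ext_iff]
  have h12 : i1 ≠ i2 := by simp [hi1def, hi2def, Fin.ext_iff]
  -- agents
  obtain ⟨B, hBval⟩ : ∃ B : Fin n, (B:ℕ) = n-2 := ⟨⟨n-2, by omega⟩, rfl⟩
  obtain ⟨C, hCval⟩ : ∃ C : Fin n, (C:ℕ) = n-1 := ⟨⟨n-1, by omega⟩, rfl⟩
  obtain ⟨A0, hA0val⟩ : ∃ A : Fin n, (A:ℕ) = 0 := ⟨⟨0, by omega⟩, rfl⟩
  have hBC : B ≠ C := by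
    intro h; rw [Fin.ext_iff, hBval, hCval] at h; omega
  have hA0B : A0 ≠ B := by
    intro h; rw [Fin.ext_iff, hA0val, hBval] at h; omega
  have hA0C : A0 ≠ C := by
    intro h; rw [Fin.ext_iff, hA0val, hCval] at h; omega
  -- the number ν = 1/n
  set ν : ℝ := 1/(n:ℝ) with hνdef
  have hnR : (3:ℝ) ≤ (n:ℝ) := by exact_mod_cast hn
  have hν0 : 0 < ν := by rw [hνdef]; positivity
  have hν3 : ν ≤ 1/3 := by
    rw [hνdef, div_le_div_iff₀ (by linarith) (by norm_num)]
    linarith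
  -- the points
  set g : Fin m → ℝ := (fun j => if j = i0 then 1-ν else if j = i1 then ν else 0) with hgdef
  set u : Fin m → ℝ :=
    (fun j => if j = i0 then 1-(ν/2) else if j = i1 then ν/2 else 0) with hudef
  set w : Fin m → ℝ :=
    (fun j => if j = i0 then 1-(ν/2) else if j = i2 then ν/2 else 0) with hwdef
  have hgmem : g ∈ stdSimplex ℝ (Fin m) := vpt_mem i0 i1 h01 ν hν0.le (by linarith)
  have humem : u ∈ stdSimplex ℝ (Fin m) := vpt_mem i0 i1 h01 (ν/2) (by linarith) (by linarith)
  have hwmem : w ∈ stdSimplex ℝ (Fin m) := vpt_mem i0 i2 h02 (ν/2) (by linarith) (by linarith)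
  -- coordinates of the points
  have hg0 : g i0 = 1 - ν := by simp [hgdef]
  have hg1 : g i1 = ν := by simp [hgdef, Ne.symm h01]
  have hg2 : g i2 = 0 := by simp [hgdef, Ne.symm h02, Ne.symm h12]
  have hgrest : ∀ j, j ≠ i0 → j ≠ i1 → g j = 0 := by
    intro j hj0 hj1; simp [hgdef, hj0, hj1]
  have hu0 : u i0 = 1 - ν/2 := by simp [hudef]
  have hu1 : u i1 = ν/2 := by simp [hudef, Ne.symm h01]
  have hurest : ∀ j, j ≠ i0 → j ≠ i1 → u j = 0 := by
    intro j hj0 hj1; simp [hudef, hj0, hj1]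
  have hw0 : w i0 = 1 - ν/2 := by simp [hwdef]
  have hw1 : w i1 = 0 := by simp [hwdef, Ne.symm h01, h12]
  have hw2 : w i2 = ν/2 := by simp [hwdef, Ne.symm h02]
  have hwrest : ∀ j, j ≠ i0 → j ≠ i2 → w j = 0 := by
    intro j hj0 hj2; simp [hwdef, hj0, hj2]
  -- profile constructor
  set prof : (Fin m → ℝ) → (Fin m → ℝ) → (Fin n → Fin m → ℝ) :=
    (fun X Y => fun i => if i = B then X else if i = C then Y else Pi.single i0 1) with hprofdef
  have hprofB : ∀ X Y, prof X Y B = X := by intro X Y; simp [hprofdef]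
  have hprofC : ∀ X Y, prof X Y C = Y := by intro X Y; simp [hprofdef, hBC.symm]
  have hprofO : ∀ X Y i, i ≠ B → i ≠ C → prof X Y i = Pi.single i0 1 := by
    intro X Y i hiB hiC; simp [hprofdef, hiB, hiC]
  have hvalid : ∀ X Y, X ∈ stdSimplex ℝ (Fin m) → Y ∈ stdSimplex ℝ (Fin m) →
      ∀ i, prof X Y i ∈ stdSimplex ℝ (Fin m) := by
    intro X Y hX hY i
    by_cases hiB : i = B
    · rw [hiB, hprofB]; exact hX
    · by_cases hiC : i = C
      · rw [hiC, hprofC]; exact hY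
      · rw [hprofO X Y i hiB hiC]; exact single_mem i0
  -- update lemmas
  have hupdB : ∀ X Y X', Function.update (prof X Y) B X' = prof X' Y := by
    intro X Y X'; funext i
    by_cases hiB : i = B
    · rw [hiB, Function.update_self, hprofB]
    · rw [Function.update_of_ne hiB]
      by_cases hiC : i = C
      · rw [hiC, hprofC, hprofC]
      · rw [hprofO X Y i hiB hiC, hprofO X' Y i hiB hiC]
  have hupdC : ∀ X Y Y', Function.update (prof X Y) C Y' = prof X Y' := by
    intro X Y Y'; funext i
    by_cases hiC : i = C
    · rw [hiC, Function.update_self, hprofC]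
    · rw [Function.update_of_ne hiC]
      by_cases hiB : i = B
      · rw [hiB, hprofB, hprofB]
      · rw [hprofO X Y i hiB hiC, hprofO X Y' i hiB hiC]
  -- SP in distance form
  have hspD : ∀ (Pr : Fin n → Fin m → ℝ), (∀ i, Pr i ∈ stdSimplex ℝ (Fin m)) →
      ∀ (i : Fin n) (p' : Fin m → ℝ), p' ∈ stdSimplex ℝ (Fin m) →
      DD (Pr i) (f Pr) ≤ DD (Pr i) (f (Function.update Pr i p')) := by
    intro Pr h i p' hp'
    have h2 := hsp Pr h i p' hp'
    rw [linfu_le_iff] at h2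
    exact h2
  -- profiles
  set P1 : Fin n → Fin m → ℝ := prof (Pi.single i0 1) (Pi.single i2 1) with hP1def
  set P2 : Fin n → Fin m → ℝ := prof (Pi.single i1 1) (Pi.single i0 1) with hP2def
  set PA : Fin n → Fin m → ℝ := prof g (Pi.single i2 1) with hPAdef
  set PU : Fin n → Fin m → ℝ := prof u (Pi.single i2 1) with hPUdef
  set PB : Fin n → Fin m → ℝ := prof (Pi.single i1 1) w with hPBdef
  set PC : Fin n → Fin m → ℝ := prof g w with hPCdef
  have hP1v := hvalid _ _ (single_mem i0) (single_mem i2)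
  have hP2v := hvalid _ _ (single_mem i1) (single_mem i0)
  have hPAv := hvalid _ _ hgmem (single_mem i2)
  have hPUv := hvalid _ _ humem (single_mem i2)
  have hPBv := hvalid _ _ (single_mem i1) hwmem
  have hPCv := hvalid _ _ hgmem hwmem
  have hfP1 := hmech P1 hP1v
  have hfP2 := hmech P2 hP2v
  have hfPA := hmech PA hPAv
  have hfPU := hmech PU hPUv
  have hfPB := hmech PB hPBv
  have hfPC := hmech PC hPCv
  -- proportionality pins
  have hpin1 := prop_pin (by omega) f hprop C i0 i2 (Ne.symm h02)
  have hpin2 := prop_pin (by omega) f hprop B i0 i1 (Ne.symm h01)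
  have hP1eq : P1 = (fun i => if i = C then Pi.single i2 1 else Pi.single i0 1) := by
    rw [hP1def]
    funext i
    by_cases hiC : i = C
    · rw [hiC, hprofC, if_pos rfl]
    · rw [if_neg hiC]
      by_cases hiB : i = B
      · rw [hiB, hprofB]
      · exact hprofO _ _ i hiB hiC
  have hP2eq : P2 = (fun i => if i = B then Pi.single i1 1 else Pi.single i0 1) := by
    rw [hP2def]
    funext i
    by_cases hiB : i = B
    · rw [hiB, hprofB, if_pos rfl]
    · rw [if_neg hiB]
      by_cases hiC : i = C
      · rw [hiC, hprofC]
      · exact hprofO _ _ i hiB hiC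
  rw [← hP1eq] at hpin1
  rw [← hP2eq] at hpin2
  obtain ⟨hfP1i0, hfP1i2, hfP1rest⟩ := hpin1
  obtain ⟨hfP2i0, hfP2i1, hfP2rest⟩ := hpin2
  rw [← hνdef] at hfP1i0 hfP1i2 hfP2i0 hfP2i1
  -- coordinate facts for profiles
  have hP1B : P1 B = Pi.single i0 1 := by rw [hP1def]; exact hprofB _ _
  have hP2C : P2 C = Pi.single i0 1 := by rw [hP2def]; exact hprofC _ _
  have hPAB : PA B = g := by rw [hPAdef]; exact hprofB _ _
  have hPUB : PU B = u := by rw [hPUdef]; exact hprofB _ _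
  have hPBC : PB C = w := by rw [hPBdef]; exact hprofC _ _
  have hPCB : PC B = g := by rw [hPCdef]; exact hprofB _ _
  have hPCC : PC C = w := by rw [hPCdef]; exact hprofC _ _
  -- update equalities
  have hE1 : Function.update P1 B g = PA := by rw [hP1def, hupdB, ← hPAdef]
  have hE2 : Function.update PA B (Pi.single i0 1) = P1 := by rw [hPAdef, hupdB, ← hP1def]
  have hE3 : Function.update P1 B u = PU := by rw [hP1def, hupdB, ← hPUdef]
  have hE4 : Function.update PU B g = PA := by rw [hPUdef, hupdB, ← hPAdef]
  have hE5 : Function.update P2 C w = PB := by rw [hP2def, hupdC, ← hPBdef]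
  have hE6 : Function.update PB C (Pi.single i0 1) = P2 := by rw [hPBdef, hupdC, ← hP2def]
  have hE7 : Function.update PC B (Pi.single i1 1) = PB := by rw [hPCdef, hupdB, ← hPBdef]
  have hE8 : Function.update PC C (Pi.single i2 1) = PA := by rw [hPCdef, hupdC, ← hPAdef]
  -- dominator lemma at PA
  have domA := dominator_lemma hm0 i0 i1 i2 h01 h02 h12 ν hν0 PA
    (by
      intro i
      by_cases hiB : i = B
      · rw [hiB, hPAB, hgdef]; exact Or.inr (Or.inl rfl)
      · by_cases hiC : i = C
        · right; right; rw [hiC, hPAdef]; exact hprofC _ _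
        · left; rw [hPAdef]; exact hprofO _ _ i hiB hiC)
    A0 (by rw [hPAdef]; exact hprofO _ _ A0 hA0B hA0C)
    (f PA) hfPA (heff PA hPAv)
  have domU := dominator_lemma hm0 i0 i1 i2 h01 h02 h12 (ν/2) (by linarith) PU
    (by
      intro i
      by_cases hiB : i = B
      · rw [hiB, hPUB, hudef]; exact Or.inr (Or.inl rfl)
      · by_cases hiC : i = C
        · right; right; rw [hiC, hPUdef]; exact hprofC _ _
        · left; rw [hPUdef]; exact hprofO _ _ i hiB hiC)
    A0 (by rw [hPUdef]; exact hprofO _ _ A0 hA0B hA0C)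
    (f PU) hfPU (heff PU hPUv)
  have domB := dominator_lemma hm0 i0 i2 i1 h02 h01 (Ne.symm h12) (ν/2) (by linarith) PB
    (by
      intro i
      by_cases hiB : i = B
      · right; right; rw [hiB, hPBdef]; exact hprofB _ _
      · by_cases hiC : i = C
        · rw [hiC, hPBC, hwdef]; exact Or.inr (Or.inl rfl)
        · left; rw [hPBdef]; exact hprofO _ _ i hiB hiC)
    A0 (by rw [hPBdef]; exact hprofO _ _ A0 hA0B hA0C)
    (f PB) hfPB (heff PB hPBv)
  obtain ⟨hArest, hAdich⟩ := domA
  obtain ⟨hUrest, hUdich⟩ := domU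
  obtain ⟨hBrest, hBdich⟩ := domB
  -- sums
  have hsumA : f PA i0 + f PA i1 + f PA i2 = 1 := by
    have h := sum_split3 i0 i1 i2 h01 h02 h12 (f PA)
    rw [hfPA.2] at h
    have hz : ∑ j ∈ ((Finset.univ.erase i0).erase i1).erase i2, f PA j = 0 :=
      Finset.sum_eq_zero (fun j hj => by
        simp only [Finset.mem_erase] at hj
        exact hArest j hj.2.2.1 hj.2.1 hj.1)
    rw [hz] at h
    linarith
  have hsumU : f PU i0 + f PU i1 + f PU i2 = 1 := by
    have h := sum_split3 i0 i1 i2 h01 h02 h12 (f PU)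
    rw [hfPU.2] at h
    have hz : ∑ j ∈ ((Finset.univ.erase i0).erase i1).erase i2, f PU j = 0 :=
      Finset.sum_eq_zero (fun j hj => by
        simp only [Finset.mem_erase] at hj
        exact hUrest j hj.2.2.1 hj.2.1 hj.1)
    rw [hz] at h
    linarith
  have hsumB : f PB i0 + f PB i1 + f PB i2 = 1 := by
    have h := sum_split3 i0 i1 i2 h01 h02 h12 (f PB)
    rw [hfPB.2] at h
    have hz : ∑ j ∈ ((Finset.univ.erase i0).erase i1).erase i2, f PB j = 0 :=
      Finset.sum_eq_zero (fun j hj => by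
        simp only [Finset.mem_erase] at hj
        exact hBrest j hj.2.2.1 hj.1 hj.2.1)
    rw [hz] at h
    linarith
  -- Step A1
  have hA1 : f PA i0 ≤ 1 - ν := by
    have h := hspD P1 hP1v B g hgmem
    rw [hE1, hP1B, DD_single hm0 hfP1 i0, DD_single hm0 hfPA i0, hfP1i0] at h
    linarith
  -- Step A2
  have hDgP1 : DD g (f P1) ≤ ν := by
    apply DD_le hm0
    intro j
    by_cases hj0 : j = i0
    · rw [hj0, hg0, hfP1i0, show (1-ν) - (1-ν) = (0:ℝ) by ring, abs_zero]; linarith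
    · by_cases hj1 : j = i1
      · rw [hj1, hg1, hfP1rest i1 (Ne.symm h01) h12, sub_zero, abs_of_nonneg hν0.le]
      · by_cases hj2 : j = i2
        · rw [hj2, hg2, hfP1i2, zero_sub, abs_neg, abs_of_nonneg hν0.le]
        · rw [hgrest j hj0 hj1, hfP1rest j hj0 hj2, sub_zero, abs_zero]; linarith
  have hA2 : DD g (f PA) ≤ ν := by
    have h := hspD PA hPAv B (Pi.single i0 1) (single_mem i0)
    rw [hE2, hPAB] at h
    exact le_trans h hDgP1
  have hA2i2 : f PA i2 ≤ ν := by
    have h := le_trans (DD_coord hm0 g (f PA) i2) hA2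
    rw [hg2, zero_sub, abs_neg, abs_of_nonneg (hfPA.1 i2)] at h
    exact h
  -- pin f PA i0 and the i1+i2 mass
  have hPA0 : f PA i0 = 1 - ν := by
    rcases hAdich with h | h
    · linarith [hsumA, hA2i2, hA1]
    · linarith [hsumA, hA1]
  have hPA12 : f PA i1 + f PA i2 = ν := by linarith [hsumA, hPA0]
  -- Step A4 (profile PU)
  have hA4a : f PU i0 ≤ 1 - ν := by
    have h := hspD P1 hP1v B u humem
    rw [hE3, hP1B, DD_single hm0 hfP1 i0, DD_single hm0 hfPU i0, hfP1i0] at h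
    linarith
  have hUi1 : f PU i1 = 0 := by
    rcases hUdich with h | h
    · exact h
    · exfalso; linarith [hsumU, hfPU.1 i1, hfPU.1 i2]
  have hUi2 : ν ≤ f PU i2 := by linarith [hsumU, hUi1, hA4a]
  have hA5a : ν ≤ DD u (f PU) := by
    have h := DD_coord hm0 u (f PU) i2
    rw [hurest i2 (Ne.symm h02) (Ne.symm h12), zero_sub, abs_neg,
        abs_of_nonneg (hfPU.1 i2)] at h
    linarith
  have hA5b : DD u (f PU) ≤ DD u (f PA) := by
    have h := hspD PU hPUv B g hgmem
    rw [hE4, hPUB] at h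
    exact h
  have hA5c : DD u (f PA) ≤ max (ν/2) (ν - f PA i1) := by
    apply DD_le hm0
    intro j
    by_cases hj0 : j = i0
    · rw [hj0, hu0, hPA0, show (1 - ν/2) - (1-ν) = ν/2 by ring,
        abs_of_nonneg (by linarith)]
      exact le_max_left _ _
    · by_cases hj1 : j = i1
      · rw [hj1, hu1]
        refine le_trans ?_ (le_max_left _ _)
        rw [abs_le]
        constructor
        · linarith [hfPA.1 i2]
        · linarith [hfPA.1 i1]
      · by_cases hj2 : j = i2
        · rw [hj2, hurest i2 (Ne.symm h02) (Ne.symm h12), zero_sub, abs_neg,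
            abs_of_nonneg (hfPA.1 i2)]
          refine le_trans ?_ (le_max_right _ _)
          linarith
        · rw [hurest j hj0 hj1, hArest j hj0 hj1 hj2, sub_zero, abs_zero]
          exact le_trans (by linarith) (le_max_left _ _)
  have hPAi1 : f PA i1 = 0 := by
    have h := le_trans hA5a (le_trans hA5b hA5c)
    rcases le_max_iff.mp h with h' | h'
    · linarith
    · exact le_antisymm (by linarith) (hfPA.1 i1)
  have hPAi2 : f PA i2 = ν := by linarith
  -- Step B1
  have hB1 : f PB i0 ≤ 1 - ν := by
    have h := hspD P2 hP2v C w hwmem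
    rw [hE5, hP2C, DD_single hm0 hfP2 i0, DD_single hm0 hfPB i0, hfP2i0] at h
    linarith
  have hBi2 : f PB i2 = 0 := by
    rcases hBdich with h | h
    · exact h
    · exfalso; linarith [hsumB, hfPB.1 i1, hfPB.1 i2]
  have hDwP2 : DD w (f P2) ≤ ν := by
    apply DD_le hm0
    intro j
    by_cases hj0 : j = i0
    · rw [hj0, hw0, hfP2i0, show (1 - ν/2) - (1-ν) = ν/2 by ring,
        abs_of_nonneg (by linarith)]
      linarith
    · by_cases hj1 : j = i1
      · rw [hj1, hw1, hfP2i1, zero_sub, abs_neg, abs_of_nonneg hν0.le]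
      · by_cases hj2 : j = i2
        · rw [hj2, hw2, hfP2rest i2 (Ne.symm h02) (Ne.symm h12), sub_zero,
            abs_of_nonneg (by linarith)]
          linarith
        · rw [hwrest j hj0 hj2, hfP2rest j hj0 hj1, sub_zero, abs_zero]; linarith
  have hB3 : DD w (f PB) ≤ ν := by
    have h := hspD PB hPBv C (Pi.single i0 1) (single_mem i0)
    rw [hE6, hPBC] at h
    exact le_trans h hDwP2
  have hBi1 : f PB i1 ≤ ν := by
    have h := le_trans (DD_coord hm0 w (f PB) i1) hB3
    rw [hw1, zero_sub, abs_neg, abs_of_nonneg (hfPB.1 i1)] at h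
    exact h
  have hPBi0 : f PB i0 = 1 - ν := by linarith [hsumB, hBi2, hBi1, hB1]
  have hPBi1 : f PB i1 = ν := by linarith [hsumB, hBi2, hPBi0]
  -- Step C
  have hDgPB : DD g (f PB) ≤ 0 := by
    apply DD_le hm0
    intro j
    by_cases hj0 : j = i0
    · rw [hj0, hg0, hPBi0, show (1-ν) - (1-ν) = (0:ℝ) by ring, abs_zero]
    · by_cases hj1 : j = i1
      · rw [hj1, hg1, hPBi1, sub_self, abs_zero]
      · by_cases hj2 : j = i2
        · rw [hj2, hg2, hBi2, sub_self, abs_zero]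
        · rw [hgrest j hj0 hj1, hBrest j hj0 hj2 hj1, sub_self, abs_zero]
  have hC1 : DD g (f PC) ≤ 0 := by
    have h := hspD PC hPCv B (Pi.single i1 1) (single_mem i1)
    rw [hE7, hPCB] at h
    exact le_trans h hDgPB
  have hsi1 : f PC i1 = ν := by
    have h := le_trans (DD_coord hm0 g (f PC) i1) hC1
    rw [hg1] at h
    have h2 : |ν - f PC i1| = 0 := le_antisymm h (abs_nonneg _)
    rw [abs_eq_zero] at h2
    linarith
  have hDwPA : DD w (f PA) ≤ ν/2 := by
    apply DD_le hm0
    intro j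
    by_cases hj0 : j = i0
    · rw [hj0, hw0, hPA0, show (1 - ν/2) - (1-ν) = ν/2 by ring,
        abs_of_nonneg (by linarith)]
    · by_cases hj1 : j = i1
      · rw [hj1, hw1, hPAi1, sub_self, abs_zero]; linarith
      · by_cases hj2 : j = i2
        · rw [hj2, hw2, hPAi2, show ν/2 - ν = -(ν/2) by ring, abs_neg,
            abs_of_nonneg (by linarith)]
        · rw [hwrest j hj0 hj2, hArest j hj0 hj1 hj2, sub_self, abs_zero]; linarith
  have hC2 : DD w (f PC) ≤ ν/2 := by
    have h := hspD PC hPCv C (Pi.single i2 1) (single_mem i2)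
    rw [hE8, hPCC] at h
    exact le_trans h hDwPA
  have hfinal : ν ≤ DD w (f PC) := by
    have h := DD_coord hm0 w (f PC) i1
    rw [hw1, hsi1, zero_sub, abs_neg, abs_of_nonneg hν0.le] at h
    exact h
  linarith
end

section
/- With Leontief utilities, weak core fair share and core fair share are equivalent: a distribution q satisfies core fair share at a profile P if and only if q satisfies weak core fair share at P. -/
/-!
Let `N'` block `q` in the core sense with `q'`, and put `r = |N'| / n`. If `r • q' ≤ q`, then
`q = r • q' + (1 - r) • q₀` for some distribution `q₀`, and against `q₀` nobody in `N'` gains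
strictly. Otherwise `q j₀ < r * q' j₀` for some `j₀`. Testing against vertices shows that every
`i ∈ N'` has `u_i(q) ≤ r * u_i(q')`, so the Leontief demand `c j = max_i u_i(q) * P i j / r` fits
under `q'` with slack at `j₀`. Spreading that slack evenly over all alternatives gives a
distribution under which every member of `N'` gains strictly, whatever the others do.
-/

/-- Leontief utility of an agent with peak `p` at distribution `q`:
the minimum of `q j / p j` over alternatives `j` with `p j > 0`. -/
noncomputable def leontief {m : ℕ} (p q : Fin m → ℝ) : ℝ :=
  sInf {x : ℝ | ∃ j, 0 < p j ∧ x = q j / p j}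

/-- `q` satisfies core fair share at profile `P` (with Leontief utilities). -/
def CoreFairShare {m n : ℕ} (P : Fin n → Fin m → ℝ) (q : Fin m → ℝ) : Prop :=
  ¬ ∃ (N' : Finset (Fin n)) (q' : Fin m → ℝ), N'.Nonempty ∧
      q' ∈ stdSimplex ℝ (Fin m) ∧
      ∀ q'' ∈ stdSimplex ℝ (Fin m),
        (∀ i ∈ N', leontief (P i) q ≤
          leontief (P i) (((N'.card : ℝ) / (n : ℝ)) • q' +
            (1 - (N'.card : ℝ) / (n : ℝ)) • q'')) ∧
        (∃ i ∈ N', leontief (P i) q <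
          leontief (P i) (((N'.card : ℝ) / (n : ℝ)) • q' +
            (1 - (N'.card : ℝ) / (n : ℝ)) • q''))

/-- `q` satisfies weak core fair share at profile `P` (with Leontief utilities). -/
def WeakCoreFairShare {m n : ℕ} (P : Fin n → Fin m → ℝ) (q : Fin m → ℝ) : Prop :=
  ¬ ∃ (N' : Finset (Fin n)) (q' : Fin m → ℝ), N'.Nonempty ∧
      q' ∈ stdSimplex ℝ (Fin m) ∧
      ∀ q'' ∈ stdSimplex ℝ (Fin m), ∀ i ∈ N',
        leontief (P i) q <
          leontief (P i) (((N'.card : ℝ) / (n : ℝ)) • q' +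
            (1 - (N'.card : ℝ) / (n : ℝ)) • q'')

section Simplex

variable {ι : Type*} [Fintype ι] {q q' : ι → ℝ}

lemma exists_lt_of_mem_stdSimplex_of_lt (hq : q ∈ stdSimplex ℝ ι) (hq' : q' ∈ stdSimplex ℝ ι)
    {j : ι} (hj : q j < q' j) : ∃ k, q' k < q k := by
  by_contra! hle
  have : ∑ k, q k < ∑ k, q' k := Finset.sum_lt_sum (fun k _ => hle k) ⟨j, Finset.mem_univ j, hj⟩
  linarith [hq.2, hq'.2]

lemma exists_mem_stdSimplex_add_smul_eq (hq : q ∈ stdSimplex ℝ ι) (hq' : q' ∈ stdSimplex ℝ ι)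
    {r : ℝ} (hr : r ≤ 1) (h : ∀ j, r * q' j ≤ q j) :
    ∃ q₀ ∈ stdSimplex ℝ ι, r • q' + (1 - r) • q₀ = q := by
  rcases hr.lt_or_eq with hr | rfl
  · have hr' : 0 < 1 - r := sub_pos.2 hr
    refine ⟨(1 - r)⁻¹ • (q - r • q'), ⟨fun j => ?_, ?_⟩, ?_⟩
    · simpa using mul_nonneg (inv_nonneg.2 hr'.le) (sub_nonneg.2 (h j))
    · simp only [Pi.smul_apply, Pi.sub_apply, smul_eq_mul, ← Finset.mul_sum,
        Finset.sum_sub_distrib, hq.2, hq'.2, mul_one, inv_mul_cancel₀ hr'.ne']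
    · rw [smul_inv_smul₀ hr'.ne', add_sub_cancel]
  · have hle : ∀ j ∈ Finset.univ, q' j ≤ q j := fun j _ => by simpa using h j
    have hqq' : q' = q := funext fun j =>
      (Finset.sum_eq_sum_iff_of_le hle).1 (hq'.2.trans hq.2.symm) j (Finset.mem_univ j)
    exact ⟨q, hq, by simp [hqq']⟩

lemma exists_mem_stdSimplex_forall_lt [Nonempty ι] {c : ι → ℝ} (hc : ∀ j, 0 ≤ c j)
    (hsum : ∑ j, c j < 1) : ∃ x ∈ stdSimplex ℝ ι, ∀ j, c j < x j := by
  set b := (stdSimplex.barycenter : stdSimplex ℝ ι)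
  refine ⟨c + (1 - ∑ j, c j) • b.1, ⟨fun j => ?_, ?_⟩, fun j => ?_⟩
  · exact add_nonneg (hc j) (mul_nonneg (by linarith) (stdSimplex.zero_le b j))
  · simp [Finset.sum_add_distrib, ← Finset.mul_sum, b.2.2]
  · have : 0 < (Fintype.card ι : ℝ)⁻¹ := by positivity
    simp only [Pi.add_apply, Pi.smul_apply, smul_eq_mul, b, stdSimplex.barycenter_apply]
    nlinarith

end Simplex

section Leontief

variable {m : ℕ} {p q x : Fin m → ℝ}

lemma exists_pos_of_mem_stdSimplex (hp : p ∈ stdSimplex ℝ (Fin m)) : ∃ j, 0 < p j := by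
  by_contra! h
  have h0 : p = 0 := funext fun j => (h j).antisymm (hp.1 j)
  simpa [h0] using hp.2

lemma leontief_set_finite (p q : Fin m → ℝ) : {x : ℝ | ∃ j, 0 < p j ∧ x = q j / p j}.Finite :=
  (Set.finite_range fun j => q j / p j).subset (by rintro _ ⟨j, _, rfl⟩; exact ⟨j, rfl⟩)

lemma leontief_le_div {j : Fin m} (hj : 0 < p j) : leontief p q ≤ q j / p j :=
  csInf_le (leontief_set_finite p q).bddBelow ⟨j, hj, rfl⟩

lemma le_leontief (hp : ∃ j, 0 < p j) {t : ℝ} (h : ∀ j, 0 < p j → t ≤ q j / p j) :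
    t ≤ leontief p q := by
  obtain ⟨j, hj⟩ := hp
  exact le_csInf ⟨q j / p j, j, hj, rfl⟩ (by rintro _ ⟨j, hj, rfl⟩; exact h j hj)

lemma exists_leontief_eq_div (hp : ∃ j, 0 < p j) (q : Fin m → ℝ) :
    ∃ j, 0 < p j ∧ leontief p q = q j / p j := by
  obtain ⟨j, hj⟩ := hp
  exact Set.Nonempty.csInf_mem (s := {x | ∃ j, 0 < p j ∧ x = q j / p j}) ⟨q j / p j, j, hj, rfl⟩
    (leontief_set_finite p q)

lemma lt_leontief (hp : ∃ j, 0 < p j) {t : ℝ} (h : ∀ j, 0 < p j → t * p j < q j) :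
    t < leontief p q := by
  obtain ⟨j, hj, hq⟩ := exists_leontief_eq_div hp q
  rw [hq, lt_div_iff₀ hj]
  exact h j hj

lemma leontief_nonneg (hp : ∃ j, 0 < p j) (hq : ∀ j, 0 ≤ q j) : 0 ≤ leontief p q :=
  le_leontief hp fun j hj => div_nonneg (hq j) hj.le

lemma leontief_mul_le (hq : ∀ j, 0 ≤ q j) {j : Fin m} (hpj : 0 ≤ p j) :
    leontief p q * p j ≤ q j := by
  rcases hpj.eq_or_lt with h | h
  · simpa [← h] using hq j
  · exact (le_div_iff₀ h).1 (leontief_le_div h)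

lemma mul_leontief_le_leontief_add_smul (hp : ∃ j, 0 < p j) {a b : ℝ} (ha : 0 ≤ a) (hb : 0 ≤ b)
    {y : Fin m → ℝ} (hy : ∀ j, 0 ≤ y j) : a * leontief p x ≤ leontief p (a • x + b • y) := by
  refine le_leontief hp fun j hj => ?_
  calc a * leontief p x ≤ a * (x j / p j) := mul_le_mul_of_nonneg_left (leontief_le_div hj) ha
    _ ≤ (a * x j + b * y j) / p j := by
      rw [← mul_div_assoc]
      gcongr
      exact le_add_of_nonneg_right (mul_nonneg hb (hy j))
    _ = (a • x + b • y) j / p j := rfl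

-- Test against a vertex other than a bottleneck `j` of `x`: at `j` the mixture is just `r * x j`.
lemma le_mul_leontief_of_forall_le_leontief_add_smul [Nontrivial (Fin m)] (hp : ∃ j, 0 < p j)
    {r u : ℝ} (h : ∀ q'' ∈ stdSimplex ℝ (Fin m), u ≤ leontief p (r • x + (1 - r) • q'')) :
    u ≤ r * leontief p x := by
  obtain ⟨j, hj, hx⟩ := exists_leontief_eq_div hp x
  obtain ⟨k, hk⟩ := exists_ne j
  set e : Fin m → ℝ := Pi.single k 1
  calc u ≤ leontief p (r • x + (1 - r) • e) := h e (single_mem_stdSimplex ℝ k)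
    _ ≤ (r • x + (1 - r) • e) j / p j := leontief_le_div hj
    _ = r * leontief p x := by simp [e, hk.symm, hx, mul_div_assoc]

end Leontief

section Core

variable {ι : Type*} {m : ℕ} {s : Finset ι} {P : ι → Fin m → ℝ} {q q' : Fin m → ℝ}

lemma exists_mem_stdSimplex_forall_lt_leontief (hs : s.Nonempty)
    (hP : ∀ i, P i ∈ stdSimplex ℝ (Fin m)) (hq' : q' ∈ stdSimplex ℝ (Fin m)) {β : ι → ℝ}
    (hβ : ∀ i ∈ s, 0 ≤ β i) (hle : ∀ i ∈ s, β i ≤ leontief (P i) q') {j₀ : Fin m}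
    (hlt : ∀ i ∈ s, β i * P i j₀ < q' j₀) :
    ∃ x ∈ stdSimplex ℝ (Fin m), ∀ i ∈ s, β i < leontief (P i) x := by
  set c : Fin m → ℝ := fun j => s.sup' hs fun i => β i * P i j
  have hc : ∀ i ∈ s, ∀ j, β i * P i j ≤ c j := fun i hi j => s.le_sup' (fun i => β i * P i j) hi
  have hcq' : ∀ j, c j ≤ q' j := fun j => Finset.sup'_le hs _ fun i hi =>
    (mul_le_mul_of_nonneg_right (hle i hi) ((hP i).1 j)).trans (leontief_mul_le hq'.1 ((hP i).1 j))
  have hsum : ∑ j, c j < 1 := hq'.2 ▸ Finset.sum_lt_sum (fun j _ => hcq' j)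
    ⟨j₀, Finset.mem_univ _, (Finset.sup'_lt_iff hs).2 hlt⟩
  have : Nonempty (Fin m) := ⟨j₀⟩
  obtain ⟨i₀, hi₀⟩ := hs
  obtain ⟨x, hx, hcx⟩ := exists_mem_stdSimplex_forall_lt
    (fun j => (mul_nonneg (hβ i₀ hi₀) ((hP i₀).1 j)).trans (hc i₀ hi₀ j)) hsum
  exact ⟨x, hx, fun i hi =>
    lt_leontief (exists_pos_of_mem_stdSimplex (hP i)) fun j _ => (hc i hi j).trans_lt (hcx j)⟩

lemma exists_forall_lt_leontief_add_smul (hs : s.Nonempty) (hP : ∀ i, P i ∈ stdSimplex ℝ (Fin m))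
    (hq : q ∈ stdSimplex ℝ (Fin m)) (hq' : q' ∈ stdSimplex ℝ (Fin m)) {r : ℝ} (hr₀ : 0 < r)
    (hr₁ : r ≤ 1)
    (hblock : ∀ q'' ∈ stdSimplex ℝ (Fin m), ∀ i ∈ s,
      leontief (P i) q ≤ leontief (P i) (r • q' + (1 - r) • q''))
    {j₀ : Fin m} (hj₀ : q j₀ < r * q' j₀) :
    ∃ x ∈ stdSimplex ℝ (Fin m), ∀ q'' ∈ stdSimplex ℝ (Fin m), ∀ i ∈ s,
      leontief (P i) q < leontief (P i) (r • x + (1 - r) • q'') := by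
  have hj₀' : q j₀ < q' j₀ := hj₀.trans_le (mul_le_of_le_one_left (hq'.1 j₀) hr₁)
  obtain ⟨k, hk⟩ := exists_lt_of_mem_stdSimplex_of_lt hq hq' hj₀'
  have : Nontrivial (Fin m) := ⟨⟨k, j₀, fun h => (h ▸ hk).not_gt hj₀'⟩⟩
  have hsupp i := exists_pos_of_mem_stdSimplex (hP i)
  obtain ⟨x, hx, hlt⟩ := exists_mem_stdSimplex_forall_lt_leontief (β := fun i => leontief (P i) q / r)
    hs hP hq' (fun i _ => div_nonneg (leontief_nonneg (hsupp i) hq.1) hr₀.le)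
    (fun i hi => (div_le_iff₀' hr₀).2 <|
      le_mul_leontief_of_forall_le_leontief_add_smul (hsupp i) fun q'' hq'' => hblock q'' hq'' i hi)
    (fun i _ => by
      rw [div_mul_eq_mul_div, div_lt_iff₀' hr₀]
      exact (leontief_mul_le hq.1 ((hP i).1 j₀)).trans_lt hj₀)
  refine ⟨x, hx, fun q'' hq'' i hi => ?_⟩
  calc leontief (P i) q = r * (leontief (P i) q / r) := (mul_div_cancel₀ _ hr₀.ne').symm
    _ < r * leontief (P i) x := mul_lt_mul_of_pos_left (hlt i hi) hr₀
    _ ≤ leontief (P i) (r • x + (1 - r) • q'') :=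
      mul_leontief_le_leontief_add_smul (hsupp i) hr₀.le (sub_nonneg.2 hr₁) hq''.1

end Core

/-- with Leontief utilities, core fair share and weak core fair share
are equivalent. -/
theorem cfs_iff_weak_cfs {m n : ℕ}
    (P : Fin n → Fin m → ℝ) (hP : ∀ i, P i ∈ stdSimplex ℝ (Fin m))
    (q : Fin m → ℝ) (hq : q ∈ stdSimplex ℝ (Fin m)) :
    CoreFairShare P q ↔ WeakCoreFairShare P q := by
  constructor
  · rintro hcore ⟨N', q', ⟨i, hi⟩, hq', hblock⟩
    exact hcore ⟨N', q', ⟨i, hi⟩, hq', fun q'' hq'' =>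
      ⟨fun k hk => (hblock q'' hq'' k hk).le, i, hi, hblock q'' hq'' i hi⟩⟩
  · rintro hweak ⟨N', q', hN', hq', hblock⟩
    set r : ℝ := (N'.card : ℝ) / n
    have hn : (0 : ℝ) < n := Nat.cast_pos.2 (Fin.pos hN'.choose)
    have hr₀ : 0 < r := div_pos (Nat.cast_pos.2 hN'.card_pos) hn
    have hr₁ : r ≤ 1 := (div_le_one hn).2 (by exact_mod_cast card_finset_fin_le N')
    by_cases hroom : ∃ j, q j < r * q' j
    · obtain ⟨j₀, hj₀⟩ := hroom
      obtain ⟨x, hx, hx_block⟩ := exists_forall_lt_leontief_add_smul hN' hP hq hq' hr₀ hr₁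
        (fun q'' hq'' => (hblock q'' hq'').1) hj₀
      exact hweak ⟨N', x, hN', hx, hx_block⟩
    · obtain ⟨q₀, hq₀, hmix⟩ := exists_mem_stdSimplex_add_smul_eq hq hq' hr₁
        fun j => not_lt.1 (not_exists.1 hroom j)
      obtain ⟨i, -, hlt⟩ := (hblock q₀ hq₀).2
      exact (hmix ▸ hlt).false
end

section
/- With Leontief utilities, let q be a distribution and P a profile such that for every nonempty subset G ⊆ {1,…,n} of agents, the total amount q(T_{q,G}) = ∑_{j ∈ T_{q,G}} q_j allocated to alternatives critical for some agent in G satisfies q(T_{q,G}) ≥ |G|/n. Then q satisfies weak core fair share at P. -/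
-- The set of critical alternatives of an agent with peak `p` under distribution `q`:
-- the alternatives attaining the minimum of `q j / p j` over `j` with `p j > 0`.
open Classical in
noncomputable def criticalSet {m : ℕ} (p q : Fin m → ℝ) : Finset (Fin m) :=
  Finset.univ.filter (fun j => 0 < p j ∧ ∀ k, 0 < p k → q j / p j ≤ q k / p k)

lemma leontief_le_aux {m : ℕ} (p x : Fin m → ℝ) (j : Fin m) (hj : 0 < p j) :
    leontief p x ≤ x j / p j := by
  apply csInf_le
  · apply Set.Finite.bddBelow
    apply Set.Finite.subset (Set.finite_range (fun k => x k / p k))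
    rintro y ⟨k, _, rfl⟩; exact ⟨k, rfl⟩
  · exact ⟨j, hj, rfl⟩

lemma le_leontief_of_critical_aux {m : ℕ} (p x : Fin m → ℝ) (j : Fin m)
    (hj : j ∈ criticalSet p x) : x j / p j ≤ leontief p x := by
  simp only [criticalSet, Finset.mem_filter, Finset.mem_univ, true_and] at hj
  obtain ⟨hjp, hmin⟩ := hj
  refine le_csInf ⟨x j / p j, j, hjp, rfl⟩ ?_
  rintro y ⟨k, hk, rfl⟩; exact hmin k hk

lemma criticalSet_nonempty_aux {m : ℕ} (p x : Fin m → ℝ)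
    (hp : p ∈ stdSimplex ℝ (Fin m)) : (criticalSet p x).Nonempty := by
  have hex : ∃ j, 0 < p j := by
    by_contra hcon; push_neg at hcon
    have h0 : ∑ j, p j = 0 :=
      Finset.sum_eq_zero (fun j _ => le_antisymm (hcon j) (hp.1 j))
    rw [hp.2] at h0; norm_num at h0
  obtain ⟨j0, hj0⟩ := hex
  obtain ⟨j, hjmem, hjmin⟩ := Finset.exists_min_image
    (Finset.univ.filter (fun k => 0 < p k)) (fun k => x k / p k)
    ⟨j0, by simp [hj0]⟩
  refine ⟨j, ?_⟩
  simp only [Finset.mem_filter, Finset.mem_univ, true_and] at hjmem ⊢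
  simp only [criticalSet, Finset.mem_filter, Finset.mem_univ, true_and]
  exact ⟨hjmem, fun k hk => hjmin k (by simp [hk])⟩

/-- with Leontief utilities, if for every nonempty group `G` of agents the
total amount that `q` allocates to alternatives critical for some agent in `G` is at
least `|G|/n`, then `q` satisfies weak core fair share. -/
theorem critical_mass_implies_weak_cfs {m n : ℕ}
    (P : Fin n → Fin m → ℝ) (hP : ∀ i, P i ∈ stdSimplex ℝ (Fin m))
    (q : Fin m → ℝ) (hq : q ∈ stdSimplex ℝ (Fin m))
    (h : ∀ G : Finset (Fin n), G.Nonempty →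
      (G.card : ℝ) / (n : ℝ) ≤ ∑ j ∈ G.biUnion (fun i => criticalSet (P i) q), q j) :
    WeakCoreFairShare P q := by
  rintro ⟨N', q', hN', hq', hblock⟩
  set r : ℝ := (N'.card : ℝ) / (n : ℝ) with hr
  set T : Finset (Fin m) := N'.biUnion (fun i => criticalSet (P i) q) with hTdef
  have hrT : r ≤ ∑ j ∈ T, q j := h N' hN'
  have hr0 : 0 ≤ r := div_nonneg (Nat.cast_nonneg _) (Nat.cast_nonneg _)
  obtain ⟨i0, hi0⟩ := hN'
  have hTne : T.Nonempty := by
    obtain ⟨j, hj⟩ := criticalSet_nonempty_aux (P i0) q (hP i0)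
    exact ⟨j, Finset.mem_biUnion.mpr ⟨i0, hi0, hj⟩⟩
  -- produce a q'' in the simplex with small weight on T
  have key : ∃ q'' ∈ stdSimplex ℝ (Fin m),
      ∑ j ∈ T, (r • q' + (1 - r) • q'') j ≤ ∑ j ∈ T, q j := by
    by_cases hc : ∃ j0 : Fin m, j0 ∉ T
    · obtain ⟨j0, hj0⟩ := hc
      refine ⟨fun j => if j = j0 then 1 else 0, ⟨?_, ?_⟩, ?_⟩
      · intro j; by_cases hj : j = j0 <;> simp [hj]
      · simp
      · have hsum : ∑ j ∈ T, (r • q' + (1 - r) • (fun j => if j = j0 then (1:ℝ) else 0)) j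
            = r * ∑ j ∈ T, q' j := by
          simp only [Pi.add_apply, Pi.smul_apply, smul_eq_mul]
          rw [Finset.sum_add_distrib, ← Finset.mul_sum, ← Finset.mul_sum]
          have : ∑ j ∈ T, (if j = j0 then (1:ℝ) else 0) = 0 := by
            apply Finset.sum_eq_zero
            intro j hj
            have : j ≠ j0 := fun e => hj0 (e ▸ hj)
            simp [this]
          rw [this]; ring
        rw [hsum]
        have hq'T : ∑ j ∈ T, q' j ≤ 1 := by
          rw [← hq'.2]
          exact Finset.sum_le_sum_of_subset_of_nonneg (Finset.subset_univ T)
            (fun j _ _ => hq'.1 j)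
        calc r * ∑ j ∈ T, q' j ≤ r * 1 := mul_le_mul_of_nonneg_left hq'T hr0
          _ = r := mul_one r
          _ ≤ ∑ j ∈ T, q j := hrT
    · push_neg at hc
      have hTuniv : T = Finset.univ := Finset.eq_univ_iff_forall.mpr hc
      refine ⟨q, hq, ?_⟩
      rw [hTuniv]
      apply le_of_eq
      simp only [Pi.add_apply, Pi.smul_apply, smul_eq_mul]
      rw [Finset.sum_add_distrib, ← Finset.mul_sum, ← Finset.mul_sum, hq'.2, hq.2]
      ring
  obtain ⟨q'', hq'', hsum⟩ := key
  obtain ⟨j, hjT, hjle⟩ := Finset.exists_le_of_sum_le hTne hsum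
  obtain ⟨i, hiN, hjc⟩ := Finset.mem_biUnion.mp hjT
  have hpij : 0 < P i j := by
    have := hjc
    simp only [criticalSet, Finset.mem_filter, Finset.mem_univ, true_and] at this
    exact this.1
  have h1 := leontief_le_aux (P i) (r • q' + (1 - r) • q'') j hpij
  have h2 := le_leontief_of_critical_aux (P i) q j hjc
  have h3 : (r • q' + (1 - r) • q'') j / P i j ≤ q j / P i j :=
    (div_le_div_iff_of_pos_right hpij).mpr hjle
  have := hblock q'' hq'' i hiN
  linarith
end
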